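/- arXiv:1911.13006 — 7 statements merged into one kernel-verified Lean document; each statement's English description precedes it below -/
import Mathlib

section
/- Let $a_1,\dots,a_n$ be real numbers with $\sum_{k=1}^n a_k = 0$. Then there exists a permutation $\sigma$ of $\{1,\dots,n\}$ such that for every $m \in \{1,\dots,n\}$, $|\sum_{k=1}^m a_{\sigma(k)}| \leq \max_{1\leq k\leq n} |a_k|$. -/
/-!
Greedy ordering with M = max |a_k|: if the partial sum c so far satisfies |c| ≤ M, the remaining
terms sum to -c, so one of them has sign opposite to c (or is zero) and appending it keeps the
partial sum in [-M, M]. The induction therefore runs with an arbitrary starting offset c.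
-/

section Greedy

variable {ι α : Type*} [AddCommGroup α] [LinearOrder α] [IsOrderedAddMonoid α] (a : ι → α) {M : α}

theorem List.exists_mem_abs_add_le {l : List ι} {c : α} (hl : l ≠ []) (hc : |c| ≤ M)
    (ha : ∀ i ∈ l, |a i| ≤ M) (hsum : c + (l.map a).sum = 0) : ∃ i ∈ l, |c + a i| ≤ M := by
  have hsum' : (l.map a).sum = -c := eq_neg_of_add_eq_zero_right hsum
  obtain ⟨hcl, hcu⟩ := abs_le.1 hc
  rcases le_total c 0 with hc0 | hc0
  · obtain ⟨i, hi, hai⟩ := l.exists_le_of_sum_le hl (fun _ => 0) a (by simpa [hsum'] using hc0)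
    exact ⟨i, hi, abs_le.2 ⟨hcl.trans (le_add_of_nonneg_right hai),
      (add_le_of_nonpos_left hc0).trans (abs_le.1 (ha i hi)).2⟩⟩
  · obtain ⟨i, hi, hai⟩ := l.exists_le_of_sum_le hl a (fun _ => 0) (by simpa [hsum'] using hc0)
    exact ⟨i, hi, abs_le.2 ⟨(abs_le.1 (ha i hi)).1.trans (le_add_of_nonneg_left hc0),
      (add_le_of_nonpos_right hai).trans hcu⟩⟩

theorem List.exists_perm_abs_add_sum_take_le (l : List ι) (c : α) (hc : |c| ≤ M)
    (ha : ∀ i ∈ l, |a i| ≤ M) (hsum : c + (l.map a).sum = 0) :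
    ∃ l' : List ι, l'.Perm l ∧ ∀ m, |c + ((l'.take m).map a).sum| ≤ M := by
  rcases eq_or_ne l [] with rfl | hl
  · exact ⟨[], .nil, by simpa using hc⟩
  obtain ⟨i, hi, hci⟩ := exists_mem_abs_add_le a hl hc ha hsum
  obtain ⟨s, t, rfl⟩ := List.append_of_mem hi
  have hperm : (s ++ i :: t).Perm (i :: (s ++ t)) := List.perm_middle
  obtain ⟨l', hl', hbound⟩ := exists_perm_abs_add_sum_take_le (s ++ t) (c + a i) hci
    (fun j hj => ha j (hperm.mem_iff.2 (mem_cons_of_mem _ hj)))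
    (by rw [← hsum, (hperm.map a).sum_eq, map_cons, sum_cons, add_assoc])
  refine ⟨i :: l', (hl'.cons i).trans hperm.symm, ?_⟩
  rintro (_ | m)
  · simpa using hc
  · simpa [add_assoc] using hbound m
termination_by l.length
decreasing_by subst_vars; simp

end Greedy

theorem List.Perm.exists_perm_ofFn_eq {n : ℕ} {l : List (Fin n)} (hl : l.Perm (List.finRange n)) :
    ∃ σ : Equiv.Perm (Fin n), List.ofFn σ = l := by
  have hlen : l.length = n := by simpa using hl.length_eq
  have hnodup : l.Nodup := hl.nodup_iff.2 (List.nodup_finRange n)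
  refine ⟨(finCongr hlen.symm).trans (List.Nodup.getEquivOfForallMemList l hnodup
    fun i => hl.mem_iff.2 (List.mem_finRange i)), ?_⟩
  exact List.ext_get (by simp [hlen]) fun k _ _ => by simp

theorem Fin.Iic_eq_filter_val_lt {n : ℕ} (m : Fin n) :
    Finset.Iic m = Finset.univ.filter fun k : Fin n => (k : ℕ) < m + 1 := by
  refine Finset.ext fun k => ?_
  simp only [Finset.mem_Iic, Finset.mem_filter, Finset.mem_univ, true_and, Fin.le_def]
  omega

theorem stmt0 (n : ℕ) (a : Fin n → ℝ) (h : ∑ k, a k = 0) :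
    ∃ σ : Equiv.Perm (Fin n), ∀ m : Fin n,
      |∑ k ∈ Finset.Iic m, a (σ k)| ≤ ⨆ k, |a k| := by
  have ha : ∀ k, |a k| ≤ ⨆ k, |a k| := le_ciSup (Finite.bddAbove_range _)
  have hM : |(0 : ℝ)| ≤ ⨆ k, |a k| := by simpa using Real.iSup_nonneg fun k => abs_nonneg (a k)
  obtain ⟨l, hl, hbound⟩ := (List.finRange n).exists_perm_abs_add_sum_take_le a 0 hM
    (fun k _ => ha k) (by rw [zero_add, ← List.ofFn_eq_map, List.sum_ofFn, h])
  obtain ⟨σ, rfl⟩ := hl.exists_perm_ofFn_eq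
  refine ⟨σ, fun m => ?_⟩
  rw [Fin.Iic_eq_filter_val_lt, ← List.sum_take_ofFn]
  simpa only [zero_add, List.map_take, List.map_ofFn, Function.comp_def] using hbound (m + 1)
end

section
/- Let $(a_{i,j})$ be an $n \times m$ matrix of real numbers such that $|a_{i,j}| \leq C$ for all $i,j$ and $\sum_{j=1}^m a_{i,j} = 0$ for each $i = 1,\dots,n$. Then there exist permutations $\sigma_1,\dots,\sigma_n$ of $\{1,\dots,m\}$ such that $|\sum_{i=1}^k a_{i,\sigma_i(j)}| \leq 2C$ for all $k = 1,\dots,n$ and $j = 1,\dots,m$. -/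
/-!
Build the permutations row by row, keeping every two column sums within `2C` of each other:
when the next row is added, pair the largest current column sum with the smallest entry of the
row (anti-sorting). Since each row sums to zero, every column-sum vector sums to zero, so it has
a nonpositive and a nonnegative entry; spread at most `2C` then forces every entry into
`[-2C, 2C]`.
-/

open Finset

variable {α : Type*} [AddCommGroup α] [LinearOrder α] [IsOrderedAddMonoid α]

theorem exists_perm_add_sub_add_le {m : ℕ} {D : α} (S b : Fin m → α)
    (hS : ∀ j j', S j - S j' ≤ D) (hb : ∀ l l', b l - b l' ≤ D) :
    ∃ σ : Equiv.Perm (Fin m), ∀ j j', (S j + b (σ j)) - (S j' + b (σ j')) ≤ D := by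
  set τ := Tuple.sort (OrderDual.toDual ∘ S)
  set τb := Tuple.sort b
  have hτ : Monotone (OrderDual.toDual ∘ S ∘ τ) := Tuple.monotone_sort _
  have hτb : Monotone (b ∘ τb) := Tuple.monotone_sort b
  refine ⟨τ.symm.trans τb, fun j j' => ?_⟩
  rw [Equiv.trans_apply, Equiv.trans_apply, add_sub_add_comm]
  rcases le_total (τ.symm j) (τ.symm j') with h | h
  · exact add_le_of_le_of_nonpos (hS j j') (sub_nonpos.mpr (hτb h))
  · have hS' : S j ≤ S j' := by simpa using hτ h
    exact add_le_of_nonpos_of_le (sub_nonpos.mpr hS') (hb _ _)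

theorem exists_perms_sum_Iic_sub_le {m : ℕ} {D : α} :
    ∀ {n : ℕ} (a : Fin n → Fin m → α), (∀ i l l', a i l - a i l' ≤ D) →
      ∃ σ : Fin n → Equiv.Perm (Fin m), ∀ k j j',
        ∑ i ∈ Iic k, a i (σ i j) - ∑ i ∈ Iic k, a i (σ i j') ≤ D
  | 0, _, _ => ⟨fun _ => 1, fun k => k.elim0⟩
  | n + 1, a, ha => by
    obtain ⟨σ', hσ'⟩ := exists_perms_sum_Iic_sub_le (fun i => a i.castSucc) (fun i => ha _)
    set S : Fin m → α := fun j => ∑ i, a i.castSucc (σ' i j)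
    have hS : ∀ j j', S j - S j' ≤ D := by
      intro j j'
      cases n with
      | zero => simpa [S] using ha 0 j j
      | succ n => simpa [S, ← Fin.top_eq_last] using hσ' (Fin.last n) j j'
    obtain ⟨τ, hτ⟩ := exists_perm_add_sub_add_le S (a (Fin.last n)) hS (ha _)
    refine ⟨Fin.snoc σ' τ, fun k j j' => ?_⟩
    induction k using Fin.lastCases with
    | last =>
      rw [show Iic (Fin.last n) = univ from Iic_top]
      simpa [Fin.sum_univ_castSucc, S] using hτ j j'
    | cast k =>
      simpa [Fin.sum_Iic_castSucc] using hσ' k j j'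

theorem abs_le_of_sum_eq_zero_of_sub_le {ι : Type*} [Fintype ι] {D : α} {x : ι → α}
    (hsum : ∑ j, x j = 0) (hx : ∀ j j', x j - x j' ≤ D) (j : ι) : |x j| ≤ D := by
  have hne : (univ : Finset ι).Nonempty := ⟨j, mem_univ j⟩
  obtain ⟨jlo, -, hlo⟩ := exists_le_of_sum_le hne (hsum.trans sum_const_zero.symm).le
  obtain ⟨jhi, -, hhi⟩ := exists_le_of_sum_le hne (sum_const_zero.trans hsum.symm).le
  refine abs_le.mpr ⟨?_, ?_⟩
  · calc -D ≤ -(x jhi - x j) := neg_le_neg (hx jhi j)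
      _ = x j - x jhi := neg_sub _ _
      _ ≤ x j := sub_le_self _ hhi
  · exact ((le_sub_self_iff _).mpr hlo).trans (hx j jlo)

theorem stmt1 (n m : ℕ) (C : ℝ) (a : Fin n → Fin m → ℝ)
    (hbound : ∀ i j, |a i j| ≤ C) (hrow : ∀ i, ∑ j, a i j = 0) :
    ∃ σ : Fin n → Equiv.Perm (Fin m), ∀ (k : Fin n) (j : Fin m),
      |∑ i ∈ Finset.Iic k, a i ((σ i) j)| ≤ 2 * C := by
  have hspread : ∀ i l l', a i l - a i l' ≤ 2 * C := fun i l l' => by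
    linarith [le_abs_self (a i l), neg_abs_le (a i l'), hbound i l, hbound i l']
  obtain ⟨σ, hσ⟩ := exists_perms_sum_Iic_sub_le a hspread
  refine ⟨σ, fun k => abs_le_of_sum_eq_zero_of_sub_le ?_ (hσ k)⟩
  rw [sum_comm]
  exact sum_eq_zero fun i _ => (Equiv.sum_comp (σ i) (a i)).trans (hrow i)
end

section
/- Let $\alpha \in (0,1)$ be irrational and let $f = (1-\alpha)\chi_{[0,\alpha)} - \alpha\chi_{(\alpha,1]}$. Then there is no compact set $A \subseteq [0,1]$ with $\lambda(A) > 0$, $\int_A f\,d\lambda = 0$, and $f|_A$ continuous, together with a homeomorphism $\varphi : A \to \{0,1\}^{\mathbb{N}}$ mapping the normalized Lebesgue measure $\lambda/\lambda(A)$ on $A$ to the Cantor measure $\mu$. -/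
open MeasureTheory Set

/-!
Put `B = A ∩ [0, α)`. On `A` the function `f` equals `1 - α` exactly on `B`, so continuity of
`f|_A` makes `B` clopen in `A`, and then `φ(B)` is clopen in the Cantor space. A clopen subset of
the Cantor space is a finite union of cylinders of one length `N`, so its Cantor measure is a
dyadic rational `k / 2^N`. On the other hand `f = 1_{[0,α)} - α` almost everywhere on `A`, so
`∫_A f = 0` says `λ(B) = α λ(A)`, i.e. `μ(φ(B)) = λ(B) / λ(A) = α`, and `α` would be rational.
-/

namespace PiNat

variable {E : ℕ → Type*} [∀ n, TopologicalSpace (E n)] [∀ n, DiscreteTopology (E n)]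

theorem exists_cylinder_subset_of_isOpen {s : Set (∀ n, E n)} (hs : IsOpen s) {x : ∀ n, E n}
    (hx : x ∈ s) : ∃ n, cylinder x n ⊆ s := by
  obtain ⟨_, ⟨y, n, rfl⟩, hxy, hys⟩ :=
    (isTopologicalBasis_cylinders E).exists_subset_of_mem_open hx hs
  exact ⟨n, mem_cylinder_iff_eq.1 hxy ▸ hys⟩

theorem exists_forall_cylinder_subset {s : Set (∀ n, E n)} (hso : IsOpen s) (hsc : IsCompact s) :
    ∃ N, ∀ x ∈ s, cylinder x N ⊆ s := by
  choose n hn using fun x (hx : x ∈ s) => exists_cylinder_subset_of_isOpen hso hx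
  obtain ⟨t, hts⟩ := hsc.elim_nhds_subcover' (fun x hx => cylinder x (n x hx))
    fun x hx => (isOpen_cylinder E x _).mem_nhds (self_mem_cylinder x _)
  set m : s → ℕ := fun z => n z z.2
  refine ⟨t.sup m, fun x hx y hy => ?_⟩
  obtain ⟨z, hzt, hxz⟩ := mem_iUnion₂.mp (hts hx)
  refine hn z z.2 fun i hi => ?_
  have hle : m z ≤ t.sup m := Finset.le_sup hzt
  rw [hy i (hi.trans_le hle), hxz i hi]

end PiNat

theorem exists_measure_eq_dyadic_of_isClopen (μ : Measure (ℕ → Bool))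
    (hμ : ∀ (n : ℕ) (s : Fin n → Bool),
      μ {x | ∀ i : Fin n, x i = s i} = (1 / 2 : ENNReal) ^ n)
    {C : Set (ℕ → Bool)} (hC : IsClopen C) :
    ∃ N k : ℕ, μ C = k * (1 / 2 : ENNReal) ^ N := by
  classical
  obtain ⟨N, hN⟩ := PiNat.exists_forall_cylinder_subset hC.isOpen hC.isClosed.isCompact
  set r : (ℕ → Bool) → Fin N → Bool := fun x i => x i
  have hr : Measurable r := by fun_prop
  set S : Finset (Fin N → Bool) := (r '' C).toFinset
  have hCS : C = r ⁻¹' S := by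
    rw [Set.coe_toFinset]
    refine (subset_preimage_image r C).antisymm fun y hy => ?_
    obtain ⟨x, hx, hxy⟩ := hy
    exact hN x hx fun i hi => (congrFun hxy ⟨i, hi⟩).symm
  refine ⟨N, S.card, ?_⟩
  rw [hCS, ← sum_measure_preimage_singleton S fun s _ => hr (measurableSet_singleton s)]
  simp [r, preimage, funext_iff, hμ]

noncomputable def step (α : ℝ) (x : ℝ) : ℝ :=
  (1 - α) * (Ico 0 α).indicator (fun _ => 1) x - α * (Ioc α 1).indicator (fun _ => 1) x

section Step

variable {α x : ℝ}

theorem step_of_lt (hx : x ∈ Icc 0 1) (hxα : x < α) : step α x = 1 - α := by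
  simp [step, hx.1, hxα, hxα.le]

theorem step_of_gt (hx : x ∈ Icc 0 1) (hxα : α < x) : step α x = -α := by
  simp [step, hxα, hxα.not_gt, hx.2]

theorem step_self : step α α = 0 := by
  simp [step]

theorem one_sub_le_step_iff (hα : α < 1) (hx : x ∈ Icc 0 1) : 1 - α ≤ step α x ↔ x < α := by
  rcases lt_trichotomy x α with hxα | rfl | hxα
  · simp [step_of_lt hx hxα, hxα]
  · simp [step_self, hα]
  · simp [step_of_gt hx hxα, hxα.not_gt]

theorem integral_step {A : Set ℝ} (hA : MeasurableSet A) (hAsub : A ⊆ Icc 0 1) :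
    ∫ x in A, step α x = volume.real (A ∩ Iio α) - α * volume.real A := by
  have : IsFiniteMeasure (volume.restrict A) :=
    isFiniteMeasure_restrict.2 (measure_mono hAsub |>.trans_lt measure_Icc_lt_top).ne
  have hae : ∀ᵐ x ∂volume.restrict A, step α x = (Iio α).indicator 1 x - α := by
    have hne : ∀ᵐ x ∂volume.restrict A, x ≠ α :=
      ae_restrict_of_ae (by simp [ae_iff, measure_singleton])
    filter_upwards [ae_restrict_mem hA, hne] with x hxA hxα
    rcases hxα.lt_or_gt with hxα | hxα
    · simp [step_of_lt (hAsub hxA) hxα, hxα]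
    · simp [step_of_gt (hAsub hxA) hxα, hxα.not_gt]
  have hind : Integrable ((Iio α).indicator 1) (volume.restrict A) :=
    (integrable_const (1 : ℝ)).indicator measurableSet_Iio
  rw [integral_congr_ae hae, integral_sub hind (integrable_const α),
    integral_indicator_one measurableSet_Iio, integral_const,
    measureReal_restrict_apply measurableSet_Iio, inter_comm]
  simp [mul_comm]

end Step

theorem stmt3_general (α : ℝ) (hα : α ∈ Set.Ioo (0:ℝ) 1) (hirr : Irrational α)
    (f : ℝ → ℝ)
    (hf : f = fun x => (1 - α) * Set.indicator (Set.Ico (0:ℝ) α) (fun _ => (1:ℝ)) x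
      - α * Set.indicator (Set.Ioc α 1) (fun _ => (1:ℝ)) x)
    (μ : Measure (ℕ → Bool))
    (hμ : ∀ (n : ℕ) (s : Fin n → Bool),
      μ {x | ∀ i : Fin n, x i = s i} = (1 / 2 : ENNReal) ^ n) :
    ¬ ∃ (A : Set ℝ) (e : A ≃ₜ (ℕ → Bool)),
        IsCompact A ∧ A ⊆ Set.Icc 0 1 ∧ 0 < volume A ∧
        (∫ x in A, f x) = 0 ∧ ContinuousOn f A ∧
        (∀ B : Set A, MeasurableSet B →
          μ (e '' B) = volume (Subtype.val '' B) / volume A) := by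
  rintro ⟨A, e, hAc, hAsub, hApos, hint, hfc, hmap⟩
  obtain rfl : f = step α := hf
  set B : Set A := (↑) ⁻¹' Iio α
  have hB : IsClopen B := by
    refine ⟨?_, isOpen_Iio.preimage continuous_subtype_val⟩
    have : B = A.domRestrict (step α) ⁻¹' Ici (1 - α) :=
      ext fun x => (one_sub_le_step_iff hα.2 (hAsub x.2)).symm
    exact this ▸ isClosed_Ici.preimage (continuousOn_iff_continuous_domRestrict.mp hfc)
  obtain ⟨N, k, hk⟩ := exists_measure_eq_dyadic_of_isClopen μ hμ
    (e.image_eq_preimage_symm B ▸ hB.preimage e.symm.continuous)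
  have hAfin : volume A ≠ ⊤ := (measure_mono hAsub |>.trans_lt measure_Icc_lt_top).ne
  have hdiv : volume.real (A ∩ Iio α) / volume.real A = k * (1 / 2) ^ N := by
    have := congrArg ENNReal.toReal (hmap B (hB.isOpen.measurableSet))
    rw [Subtype.image_preimage_coe, hk, ENNReal.toReal_div] at this
    simpa [measureReal_def] using this.symm
  rw [integral_step hAc.isClosed.measurableSet hAsub, sub_eq_zero] at hint
  have hα_eq : α = k * (1 / 2) ^ N :=
    hdiv ▸ eq_div_of_mul_eq (ENNReal.toReal_pos hApos.ne' hAfin).ne' hint.symm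
  exact hirr ⟨k * (1 / 2) ^ N, by push_cast; exact hα_eq.symm⟩

theorem stmt3 (α : ℝ) (hα : α ∈ Set.Ioo (0:ℝ) 1) (hirr : Irrational α)
    (f : ℝ → ℝ)
    (hf : f = fun x => (1 - α) * Set.indicator (Set.Ico (0:ℝ) α) (fun _ => (1:ℝ)) x
      - α * Set.indicator (Set.Ioc α 1) (fun _ => (1:ℝ)) x)
    (μ : Measure (ℕ → Bool)) [IsProbabilityMeasure μ]
    (hμ : ∀ (n : ℕ) (s : Fin n → Bool),
      μ {x | ∀ i : Fin n, x i = s i} = (1 / 2 : ENNReal) ^ n) :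
    ¬ ∃ (A : Set ℝ) (e : A ≃ₜ (ℕ → Bool)),
        IsCompact A ∧ A ⊆ Set.Icc 0 1 ∧ 0 < volume A ∧
        (∫ x in A, f x) = 0 ∧ ContinuousOn f A ∧
        (∀ B : Set A, MeasurableSet B →
          μ (e '' B) = volume (Subtype.val '' B) / volume A) :=
  stmt3_general α hα hirr f hf μ hμ
end

section
/- Let $D \subseteq [0,1]$ be measurable and $f \in L_\infty(D)$ real-valued with $f \neq 0$ and $\int_D f\,d\lambda = 0$. Set $\tau^\pm = \lambda(\{\pm f > \frac{1}{2}\|f^\pm\|_\infty\})$ and let $0 < \epsilon < \frac{1}{4}\min\{\tau^+ \|f^+\|_\infty/\|f\|_\infty,\ \tau^- \|f^-\|_\infty/\|f\|_\infty\}$. Then for any compact subset $E \subseteq D$ with $\lambda(E) \geq \lambda(D) - \epsilon$ on which $f$ is continuous, there exists a compact subset $K \subseteq E$ with $\int_K f\,d\lambda = 0$ and $\lambda(K) \geq \lambda(D) - (1 + 2\|f\|_\infty \max\{1/\|f^+\|_\infty, 1/\|f^-\|_\infty\})\epsilon$. -/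
/-!
Let `I = ∫_E f`. Since `∫_D f = 0` and `λ(D \ E) ≤ ε`, we have `|I| ≤ ‖f‖∞ ε`; say `I ≥ 0`
(otherwise replace `f` by `-f`). On `E`, the superlevel set `{f > b}` with `b = ‖f⁺‖∞ / 2` is
relatively open, `V ∩ E` with `V` open, and the smallness of `ε` gives `I ≤ b λ(E ∩ {f > b})
≤ ∫_{E ∩ V} f`. Sweeping `V ∩ E` from the left, `t ↦ ∫_{Iio t ∩ V ∩ E} f` is continuous, so
it takes the value `I` at some `t`; then `K = E \ (Iio t ∩ V)` is compact, `∫_K f = 0`, and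
since `f > b` on the removed part, its measure is at most `I / b ≤ 2 ‖f‖∞ ε / ‖f⁺‖∞`.
-/

open MeasureTheory Set
open scoped ENNReal

theorem norm_setIntegral_le_of_setIntegral_eq_zero {α : Type*} [MeasurableSpace α]
    {μ : Measure α} {D E : Set α} {f : α → ℝ} {C : ℝ} (hE : MeasurableSet E) (hED : E ⊆ D)
    (hDfin : μ D ≠ ∞) (hf : IntegrableOn f D μ) (hmean : ∫ x in D, f x ∂μ = 0)
    (hC : ∀ᵐ x ∂μ.restrict D, ‖f x‖ ≤ C) :
    ‖∫ x in E, f x ∂μ‖ ≤ C * μ.real (D \ E) := by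
  have hsplit := integral_inter_add_sdiff hE hf
  rw [inter_eq_right.2 hED, hmean] at hsplit
  rw [eq_neg_of_add_eq_zero_left hsplit, norm_neg]
  exact norm_setIntegral_le_of_norm_le_const_ae (measure_ne_top_of_subset sdiff_subset hDfin).lt_top
    (ae_restrict_of_ae_restrict_of_subset sdiff_subset hC)

theorem toReal_eLpNorm_max_zero_le {α : Type*} [MeasurableSpace α] {μ : Measure α} {g : α → ℝ}
    {p : ℝ≥0∞} (hg : eLpNorm g p μ ≠ ∞) :
    (eLpNorm (fun y ↦ max (g y) 0) p μ).toReal ≤ (eLpNorm g p μ).toReal := by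
  refine ENNReal.toReal_mono hg (eLpNorm_mono fun y ↦ ?_)
  rw [Real.norm_eq_abs, Real.norm_eq_abs, abs_of_nonneg (le_max_right _ _)]
  exact max_le (le_abs_self _) (abs_nonneg _)

theorem exists_setIntegral_Iio_inter_eq {μ : Measure ℝ} [NullSingletonClass μ] {f : ℝ → ℝ}
    {S : Set ℝ} (hS : MeasurableSet S) (hSb : Bornology.IsBounded S) (hf : IntegrableOn f S μ)
    {y : ℝ} (hy : y ∈ uIcc 0 (∫ x in S, f x ∂μ)) : ∃ t, ∫ x in Iio t ∩ S, f x ∂μ = y := by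
  set g : ℝ → ℝ := fun t ↦ ∫ x in Iio t, S.indicator f x ∂μ
  have hg : ∀ t, g t = ∫ x in Iio t ∩ S, f x ∂μ := fun t ↦ setIntegral_indicator hS
  set a := sInf S
  set c := sSup S + 1
  have hac : a ≤ c := (Real.sInf_le_sSup S hSb.bddBelow hSb.bddAbove).trans (lt_add_one _).le
  have hcont : ContinuousOn g (uIcc a c) := by
    rw [uIcc_of_le hac]
    exact ((integrable_indicator_iff hS).2 hf).integrableOn.continuousOn_Iic_primitive_Iio.mono
      Icc_subset_Iic_self
  have hga : g a = 0 := by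
    have : Iio a ∩ S = ∅ :=
      eq_empty_of_forall_notMem fun x hx ↦ hx.1.not_ge (csInf_le hSb.bddBelow hx.2)
    rw [hg, this, Measure.restrict_empty, integral_zero_measure]
  have hgc : g c = ∫ x in S, f x ∂μ := by
    have : S ⊆ Iio c := fun x hx ↦ (le_csSup hSb.bddAbove hx).trans_lt (lt_add_one _)
    rw [hg, inter_eq_right.2 this]
  have hy' : y ∈ uIcc (g a) (g c) := by rwa [hga, hgc]
  obtain ⟨t, -, ht⟩ := intermediate_value_uIcc hcont hy'
  exact ⟨t, (hg t).symm.trans ht⟩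

theorem exists_isCompact_subset_setIntegral_eq_zero {μ : Measure ℝ} [IsFiniteMeasureOnCompacts μ]
    [NullSingletonClass μ] {E : Set ℝ} (hE : IsCompact E) {f : ℝ → ℝ} (hf : ContinuousOn f E)
    {b : ℝ} (hb : 0 < b) (hI₀ : 0 ≤ ∫ x in E, f x ∂μ)
    (hI : ∫ x in E, f x ∂μ ≤ b * μ.real (E ∩ {x | b < f x})) :
    ∃ K, IsCompact K ∧ K ⊆ E ∧ ∫ x in K, f x ∂μ = 0 ∧
      μ.real E - (∫ x in E, f x ∂μ) / b ≤ μ.real K := by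
  have hint : IntegrableOn f E μ := hf.integrableOn_compact hE
  obtain ⟨V, hV, hVE⟩ := continuousOn_iff'.1 hf (Ioi b) isOpen_Ioi
  have hEV : E ∩ {x | b < f x} = E ∩ V := by rw [inter_comm E V, ← hVE, inter_comm]; rfl
  have hlower : ∀ T ⊆ E ∩ V, MeasurableSet T → b * μ.real T ≤ ∫ x in T, f x ∂μ :=
    fun T hT hTm ↦ setIntegral_ge_of_const_le_real hTm
      (measure_ne_top_of_subset (hT.trans inter_subset_left) hE.measure_lt_top.ne)
      (fun x hx ↦ le_of_lt (hVE.symm.subset (by rw [inter_comm]; exact hT hx)).1)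
      (hint.mono_set (hT.trans inter_subset_left))
  have hEVm : MeasurableSet (E ∩ V) := hE.measurableSet.inter hV.measurableSet
  obtain ⟨t, ht⟩ := exists_setIntegral_Iio_inter_eq hEVm (hE.isBounded.subset inter_subset_left)
    (hint.mono_set inter_subset_left) (y := ∫ x in E, f x ∂μ)
    (Icc_subset_uIcc ⟨hI₀, hEV ▸ hI |>.trans (hlower _ subset_rfl hEVm)⟩)
  have hW : Iio t ∩ (E ∩ V) = E ∩ (Iio t ∩ V) := inter_left_comm _ _ _
  have hWo : IsOpen (Iio t ∩ V) := isOpen_Iio.inter hV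
  refine ⟨E \ (Iio t ∩ V), hE.diff hWo, sdiff_subset, ?_, ?_⟩
  · have := integral_inter_add_sdiff hWo.measurableSet hint
    rw [← hW, ht] at this
    linarith
  · have hsplit :=
      measureReal_inter_add_sdiff (μ := μ) (s := E) hWo.measurableSet hE.measure_lt_top.ne
    have hbound := hlower (Iio t ∩ (E ∩ V)) inter_subset_right (measurableSet_Iio.inter hEVm)
    rw [ht, hW] at hbound
    have : μ.real (E ∩ (Iio t ∩ V)) ≤ (∫ x in E, f x ∂μ) / b := by
      rwa [le_div_iff₀ hb, mul_comm]
    linarith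

section

variable {μ : Measure ℝ} [IsFiniteMeasureOnCompacts μ] [NullSingletonClass μ] {D E : Set ℝ}
  {f : ℝ → ℝ} {C ε : ℝ}

theorem exists_isCompact_subset_setIntegral_eq_zero_of_nonneg (hD : MeasurableSet D)
    (hDfin : μ D ≠ ∞) (hf : IntegrableOn f D μ) (hmean : ∫ x in D, f x ∂μ = 0) (hC₀ : 0 ≤ C)
    (hC : ∀ᵐ x ∂μ.restrict D, ‖f x‖ ≤ C) (hE : IsCompact E) (hED : E ⊆ D)
    (hcont : ContinuousOn f E) (hEμ : μ.real D - ε ≤ μ.real E) {b : ℝ} (hb : 0 < b)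
    (hmargin : C * ε + b * ε ≤ b * (μ.restrict D).real {x | b < f x})
    (hI₀ : 0 ≤ ∫ x in E, f x ∂μ) :
    ∃ K, IsCompact K ∧ K ⊆ E ∧ ∫ x in K, f x ∂μ = 0 ∧ μ.real D - (1 + C / b) * ε ≤ μ.real K := by
  have hDE : μ.real (D \ E) ≤ ε := by
    rw [measureReal_sdiff hED hE.measurableSet hDfin]; linarith
  have hI : ∫ x in E, f x ∂μ ≤ C * ε :=
    (le_abs_self _).trans <| (norm_setIntegral_le_of_setIntegral_eq_zero hE.measurableSet hED
      hDfin hf hmean hC).trans (mul_le_mul_of_nonneg_left hDE hC₀)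
  have hlevel : (μ.restrict D).real {x | b < f x} ≤ μ.real (E ∩ {x | b < f x}) + ε := by
    rw [measureReal_restrict_apply' hD]
    have hsub : {x | b < f x} ∩ D ⊆ E ∩ {x | b < f x} ∪ D \ E := fun x ⟨hxP, hxD⟩ ↦ by
      by_cases hxE : x ∈ E
      exacts [Or.inl ⟨hxE, hxP⟩, Or.inr ⟨hxD, hxE⟩]
    calc μ.real ({x | b < f x} ∩ D) ≤ μ.real (E ∩ {x | b < f x} ∪ D \ E) :=
          measureReal_mono hsub (measure_ne_top_of_subset
            (union_subset (inter_subset_left.trans hED) sdiff_subset) hDfin)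
      _ ≤ μ.real (E ∩ {x | b < f x}) + ε := (measureReal_union_le _ _).trans (by gcongr)
  obtain ⟨K, hK, hKE, hK0, hKμ⟩ := exists_isCompact_subset_setIntegral_eq_zero hE hcont hb hI₀
    (by nlinarith)
  refine ⟨K, hK, hKE, hK0, ?_⟩
  have : (∫ x in E, f x ∂μ) / b ≤ C / b * ε := by
    rw [div_mul_eq_mul_div]; gcongr
  linarith

theorem exists_isCompact_subset_setIntegral_eq_zero_of_margin (hD : MeasurableSet D)
    (hDfin : μ D ≠ ∞) (hf : IntegrableOn f D μ) (hmean : ∫ x in D, f x ∂μ = 0) (hC₀ : 0 ≤ C)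
    (hC : ∀ᵐ x ∂μ.restrict D, ‖f x‖ ≤ C) (hE : IsCompact E) (hED : E ⊆ D)
    (hcont : ContinuousOn f E) (hEμ : μ.real D - ε ≤ μ.real E) {bp bm : ℝ} (hbp : 0 < bp)
    (hbm : 0 < bm) (hp : C * ε + bp * ε ≤ bp * (μ.restrict D).real {x | bp < f x})
    (hm : C * ε + bm * ε ≤ bm * (μ.restrict D).real {x | f x < -bm}) :
    ∃ K, IsCompact K ∧ K ⊆ E ∧ ∫ x in K, f x ∂μ = 0 ∧
      μ.real D - (1 + C * max (1 / bp) (1 / bm)) * ε ≤ μ.real K := by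
  have hε : 0 ≤ ε := by linarith [measureReal_mono (μ := μ) hED hDfin]
  rcases le_total 0 (∫ x in E, f x ∂μ) with hI | hI
  · obtain ⟨K, hK, hKE, hK0, hKμ⟩ := exists_isCompact_subset_setIntegral_eq_zero_of_nonneg hD
      hDfin hf hmean hC₀ hC hE hED hcont hEμ hbp hp hI
    refine ⟨K, hK, hKE, hK0, hKμ.trans' ?_⟩
    rw [div_eq_mul_one_div C]
    gcongr
    exact le_max_left _ _
  · obtain ⟨K, hK, hKE, hK0, hKμ⟩ := exists_isCompact_subset_setIntegral_eq_zero_of_nonneg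
      (f := fun x ↦ -f x) hD hDfin hf.neg (by rw [integral_neg, hmean, neg_zero]) hC₀
      (by simpa only [norm_neg] using hC) hE hED hcont.neg hEμ hbm
      (by simpa only [lt_neg] using hm) (by rw [integral_neg]; linarith)
    refine ⟨K, hK, hKE, by rwa [integral_neg, neg_eq_zero] at hK0, hKμ.trans' ?_⟩
    rw [div_eq_mul_one_div C]
    gcongr
    exact le_max_right _ _

end

theorem pos_and_margin_of_lt_div {nf n τ ε : ℝ} (hn : 0 ≤ n) (hnf : n ≤ nf) (hτ : 0 ≤ τ)
    (hε : 0 < ε) (h : ε < τ * n / nf / 4) : 0 < n / 2 ∧ nf * ε + n / 2 * ε ≤ n / 2 * τ := by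
  have hnf : 0 < nf := by
    rcases (hn.trans hnf).eq_or_lt with h0 | h0
    · rw [← h0, div_zero, zero_div] at h; linarith
    · exact h0
  have h4 : 4 * nf * ε < τ * n := by rw [div_div, lt_div_iff₀ (by positivity)] at h; linarith
  have hn' : 0 < n := pos_of_mul_pos_right (by nlinarith) hτ
  exact ⟨half_pos hn', by nlinarith⟩

theorem stmt5_general (D : Set ℝ) (hD : MeasurableSet D) (hD1 : D ⊆ Set.Icc 0 1)
    (f : ℝ → ℝ) (hf : MemLp f ⊤ (volume.restrict D))
    (hmean : ∫ x in D, f x = 0)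
    (nf np nm τp τm : ℝ)
    (hnf : nf = (eLpNorm f ⊤ (volume.restrict D)).toReal)
    (hnp : np = (eLpNorm (fun y => max (f y) 0) ⊤ (volume.restrict D)).toReal)
    (hnm : nm = (eLpNorm (fun y => max (-f y) 0) ⊤ (volume.restrict D)).toReal)
    (hτp : τp = ((volume.restrict D) {x | np / 2 < f x}).toReal)
    (hτm : τm = ((volume.restrict D) {x | f x < -(nm / 2)}).toReal)
    (ε : ℝ) (hε : 0 < ε)
    (hε2 : ε < min (τp * np / nf) (τm * nm / nf) / 4)
    (E : Set ℝ) (hE : IsCompact E) (hED : E ⊆ D)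
    (hEmeas : (volume D).toReal - ε ≤ (volume E).toReal)
    (hcont : ContinuousOn f E) :
    ∃ K : Set ℝ, IsCompact K ∧ K ⊆ E ∧ (∫ x in K, f x) = 0 ∧
      (volume D).toReal - (1 + 2 * nf * max (1 / np) (1 / nm)) * ε ≤ (volume K).toReal := by
  have hDfin : volume D ≠ ∞ := measure_ne_top_of_subset hD1 measure_Icc_lt_top.ne
  have : IsFiniteMeasure (volume.restrict D) := isFiniteMeasure_restrict.2 hDfin
  have hbound : ∀ᵐ x ∂volume.restrict D, ‖f x‖ ≤ nf := by
    rw [hnf, toReal_eLpNorm hf.aestronglyMeasurable]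
    exact ae_le_lpNorm_exponent_top hf
  have hnp_le : np ≤ nf := hnp ▸ hnf ▸ toReal_eLpNorm_max_zero_le hf.eLpNorm_ne_top
  have hnm_le : nm ≤ nf := by
    rw [hnm, hnf, ← eLpNorm_neg f]
    exact toReal_eLpNorm_max_zero_le hf.neg.eLpNorm_ne_top
  obtain ⟨hbp, hp⟩ := pos_and_margin_of_lt_div (hnp ▸ ENNReal.toReal_nonneg) hnp_le
    (hτp ▸ ENNReal.toReal_nonneg) hε (hε2.trans_le (by gcongr; exact min_le_left _ _))
  obtain ⟨hbm, hm⟩ := pos_and_margin_of_lt_div (hnm ▸ ENNReal.toReal_nonneg) hnm_le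
    (hτm ▸ ENNReal.toReal_nonneg) hε (hε2.trans_le (by gcongr; exact min_le_right _ _))
  obtain ⟨K, hK, hKE, hK0, hKμ⟩ := exists_isCompact_subset_setIntegral_eq_zero_of_margin hD hDfin
    (hf.integrable le_top) hmean (hnf ▸ ENNReal.toReal_nonneg) hbound hE hED hcont hEmeas hbp hbm
    (by rwa [hτp] at hp) (by rwa [hτm] at hm)
  refine ⟨K, hK, hKE, hK0, le_of_eq_of_le ?_ hKμ⟩
  rw [one_div_div, one_div_div, div_eq_mul_one_div 2 np, div_eq_mul_one_div 2 nm,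
    ← mul_max_of_nonneg _ _ zero_le_two, mul_left_comm, mul_assoc]
  rfl

theorem stmt5 (D : Set ℝ) (hD : MeasurableSet D) (hD1 : D ⊆ Set.Icc 0 1)
    (f : ℝ → ℝ) (hf : MemLp f ⊤ (volume.restrict D))
    (hne : ¬ f =ᵐ[volume.restrict D] 0) (hmean : ∫ x in D, f x = 0)
    (nf np nm τp τm : ℝ)
    (hnf : nf = (eLpNorm f ⊤ (volume.restrict D)).toReal)
    (hnp : np = (eLpNorm (fun y => max (f y) 0) ⊤ (volume.restrict D)).toReal)
    (hnm : nm = (eLpNorm (fun y => max (-f y) 0) ⊤ (volume.restrict D)).toReal)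
    (hτp : τp = ((volume.restrict D) {x | np / 2 < f x}).toReal)
    (hτm : τm = ((volume.restrict D) {x | f x < -(nm / 2)}).toReal)
    (ε : ℝ) (hε : 0 < ε)
    (hε2 : ε < min (τp * np / nf) (τm * nm / nf) / 4)
    (E : Set ℝ) (hE : IsCompact E) (hED : E ⊆ D)
    (hEmeas : (volume D).toReal - ε ≤ (volume E).toReal)
    (hcont : ContinuousOn f E) :
    ∃ K : Set ℝ, IsCompact K ∧ K ⊆ E ∧ (∫ x in K, f x) = 0 ∧
      (volume D).toReal - (1 + 2 * nf * max (1 / np) (1 / nm)) * ε ≤ (volume K).toReal :=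
  stmt5_general D hD hD1 f hf hmean nf np nm τp τm hnf hnp hnm hτp hτm ε hε hε2 E hE hED hEmeas
    hcont
end

section
/- Let $K \subseteq [0,1]$ be compact with $\lambda(K) > 0$ and let $f : K \to \mathbb{R}$ be continuous, mean zero, and satisfy: there exists $\kappa \in \mathbb{R}$ with $\lambda(f^{-1}(\{y\})) = 0$ for all $y < \kappa$ and $f = \kappa$ on $\{f \geq \kappa\}$. Then for every $c \in (0, \lambda(K))$ there exists a compact subset $E \subseteq K \cap (\inf K, \sup K)$ with $\lambda(E) = \lambda(K) - c$ and $\int_E f\,d\lambda = 0$. -/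
/-
Put `w = λ(K) - c`. Below its maximum `κ` the distribution of `f` has no atoms, so `K` has
sublevel sets `{f ≤ t}` of every measure up to `λ{f < κ}`, while the top level set `{f = κ}` can
be cut spatially into compact pieces of every measure. Measuring the lower parts by their mass
`x`, the integral of `f` over them becomes a continuous function `G x`.

By the bathtub principle the set of measure `w` carrying the lowest values of `f` has
integral `≤ 0` and the one carrying the highest values has integral `≥ 0`, strictly unless
`f = 0` a.e. (when any compact set of measure `w` inside `(inf K, sup K)` will do). Strict
inequalities survive when both sets are moved into `K ∩ [a, b]` with `inf K < a`, `b < sup K`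
and `λ(K \ [a, b])` small. Inside `K ∩ [a, b]` the compact sets `{f ≤ t} ∪ (piece of {f = κ})`,
followed by the windows `{s ≤ f ≤ t} ∪ {f = κ}`, connect these two sets continuously in mass
coordinates, and the intermediate value theorem gives one with integral zero.
-/

open MeasureTheory Set Filter Topology
open scoped NNReal

section FiniteMeasure

variable {α : Type*} [MeasurableSpace α] {μ : Measure α} [IsFiniteMeasure μ] {f : α → ℝ} {θ : ℝ}

theorem setIntegral_le_of_le_const_real {s : Set α} (hs : MeasurableSet s) (hf : IntegrableOn f s μ)
    (hle : ∀ x ∈ s, f x ≤ θ) : ∫ x in s, f x ∂μ ≤ θ * μ.real s := by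
  simpa [mul_comm] using setIntegral_mono_on hf (integrableOn_const (C := θ)) hs hle

theorem setIntegral_le_setIntegral_of_measureReal_eq {B Y : Set α} (hB : MeasurableSet B)
    (hY : MeasurableSet Y) (hfB : IntegrableOn f B μ) (hfY : IntegrableOn f Y μ)
    (hBY : μ.real B = μ.real Y) (hle : ∀ x ∈ B \ Y, f x ≤ θ) (hge : ∀ x ∈ Y \ B, θ ≤ f x) :
    ∫ x in B, f x ∂μ ≤ ∫ x in Y, f x ∂μ := by
  have hsdiff : μ.real (B \ Y) = μ.real (Y \ B) := by
    have hB' := measureReal_inter_add_sdiff (μ := μ) (s := B) hY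
    have hY' := measureReal_inter_add_sdiff (μ := μ) (s := Y) hB
    rw [inter_comm] at hY'
    linarith
  have h₁ := setIntegral_le_of_le_const_real (hB.diff hY) (hfB.mono_set sdiff_subset) hle
  have h₂ := setIntegral_ge_of_const_le_real (hY.diff hB) (measure_ne_top μ _) hge
    (hfY.mono_set sdiff_subset)
  rw [hsdiff] at h₁
  rw [← integral_inter_add_sdiff hY hfB, ← integral_inter_add_sdiff hB hfY, inter_comm Y B]
  linarith

theorem setIntegral_neg_of_le_of_le {L B : Set α} (hL : MeasurableSet L) (hB : MeasurableSet B)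
    (hBL : B ⊆ L) (hf : IntegrableOn f L μ) (hmean : ∫ x in L, f x ∂μ = 0)
    (hle : ∀ x ∈ B, f x ≤ θ) (hge : ∀ x ∈ L \ B, θ ≤ f x) (hB0 : 0 < μ.real B)
    (hLB0 : 0 < μ.real (L \ B)) (hf0 : ¬ ∀ᵐ x ∂μ.restrict L, f x = 0) :
    ∫ x in B, f x ∂μ < 0 := by
  have hfB := hf.mono_set hBL
  have hfLB := hf.mono_set (sdiff_subset : L \ B ⊆ L)
  have hsplit : ∫ x in B, f x ∂μ + ∫ x in L \ B, f x ∂μ = 0 := by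
    rw [← hmean, ← integral_inter_add_sdiff hB hf, inter_eq_right.2 hBL]
  have h₁ := setIntegral_le_of_le_const_real hB hfB hle
  have h₂ := setIntegral_ge_of_const_le_real (hL.diff hB) (measure_ne_top μ _) hge hfLB
  by_contra! hpos
  -- `0 ≤ ∫_B ≤ θ μ(B)` and `θ μ(L \ B) ≤ ∫_{L \ B} = -∫_B ≤ 0`
  have hθ : θ = 0 := by
    apply le_antisymm <;> nlinarith
  subst hθ
  have hB_ae : ∀ᵐ x ∂μ.restrict B, f x = 0 := by
    have h := (setIntegral_eq_zero_iff_of_nonneg_ae (f := fun x => -f x)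
      ((ae_restrict_iff' hB).2 (ae_of_all _ fun x hx => neg_nonneg.2 (hle x hx))) hfB.neg).1
      (by rw [integral_neg]; linarith)
    filter_upwards [h] with x hx
    simpa using hx
  have hLB_ae : ∀ᵐ x ∂μ.restrict (L \ B), f x = 0 :=
    (setIntegral_eq_zero_iff_of_nonneg_ae ((ae_restrict_iff' (hL.diff hB)).2 (ae_of_all _ hge))
      hfLB).1 (by linarith)
  apply hf0
  rw [← union_sdiff_cancel hBL, ae_restrict_union_iff]
  exact ⟨hB_ae, hLB_ae⟩

end FiniteMeasure

section AtomlessReal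

variable {μ : Measure ℝ} [IsFiniteMeasure μ] [NullSingletonClass μ]

theorem continuous_measureReal_Iic : Continuous fun t => μ.real (Iic t) := by
  simp_rw [← integral_indicator_one measurableSet_Iic]
  refine continuous_iff_continuousAt.2 fun t₀ => continuousAt_of_dominated (bound := 1)
    (Eventually.of_forall fun t =>
      (measurable_one.indicator measurableSet_Iic).aestronglyMeasurable)
    (Eventually.of_forall fun t => ae_of_all _ fun x => ?_) (integrable_const 1) ?_
  · by_cases hx : x ∈ Iic t <;> simp [hx]
  · filter_upwards [Measure.ae_ne μ t₀] with x hx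
    rcases hx.lt_or_gt with hx | hx
    · exact EventuallyEq.continuousAt (y := 1)
        ((eventually_gt_nhds hx).mono fun t ht => indicator_of_mem (mem_Iic.2 ht.le) _)
    · exact EventuallyEq.continuousAt (y := 0)
        ((eventually_lt_nhds hx).mono fun t ht => indicator_of_notMem (notMem_Iic.2 ht) _)

theorem continuous_measureReal_inter_Iic (X : Set ℝ) : Continuous fun v => μ.real (X ∩ Iic v) := by
  simpa only [measureReal_restrict_apply measurableSet_Iic, inter_comm]
    using continuous_measureReal_Iic (μ := μ.restrict X)

theorem exists_measureReal_inter_Iic_eq {X : Set ℝ} (hX : Bornology.IsBounded X) {β : ℝ}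
    (hβ : β ∈ Icc 0 (μ.real X)) :
    ∃ v, μ.real (X ∩ Iic v) = β := by
  obtain ⟨a, ha⟩ := hX.bddBelow
  obtain ⟨b, hb⟩ := hX.bddAbove
  have hcont := continuous_measureReal_inter_Iic (μ := μ) X
  have hlow : X ∩ Iic (a - 1) = ∅ :=
    eq_empty_of_forall_notMem fun x hx => by linarith [ha hx.1, mem_Iic.1 hx.2]
  have hhigh : X ∩ Iic b = X := inter_eq_left.2 hb
  exact intermediate_value_univ (a - 1) b hcont (by rwa [hlow, hhigh, measureReal_empty])

theorem exists_measureReal_sdiff_Icc_lt {K : Set ℝ} (hK : Bornology.IsBounded K) {δ : ℝ}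
    (hδ : 0 < δ) : ∃ a b, sInf K < a ∧ b < sSup K ∧ μ.real (K \ Icc a b) < δ := by
  have hcont := continuous_measureReal_inter_Iic (μ := μ) K
  have hlow : μ.real (K ∩ Iic (sInf K)) = 0 :=
    measureReal_mono_null (s₂ := {sInf K})
      (fun x hx => le_antisymm hx.2 (csInf_le hK.bddBelow hx.1))
      (by rw [measureReal_def, measure_singleton, ENNReal.toReal_zero])
  have hhigh : μ.real (K ∩ Iic (sSup K)) = μ.real K := by
    rw [inter_eq_left.2 fun x hx => mem_Iic.2 (le_csSup hK.bddAbove hx)]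
  obtain ⟨a, ha, hav⟩ := ((hcont.tendsto (sInf K)).eventually
    (gt_mem_nhds (show μ.real (K ∩ Iic (sInf K)) < δ / 2 by linarith))).exists_gt
  obtain ⟨b, hb, hbv⟩ := ((hcont.tendsto (sSup K)).eventually
    (lt_mem_nhds (show μ.real K - δ / 2 < μ.real (K ∩ Iic (sSup K)) by linarith))).exists_lt
  refine ⟨a, b, ha, hb, ?_⟩
  have hsub : K \ Icc a b ⊆ (K ∩ Iic a) ∪ (K \ Iic b) := by
    rintro x ⟨hxK, hx⟩
    rcases le_or_gt x a with hxa | hxa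
    · exact Or.inl ⟨hxK, hxa⟩
    · exact Or.inr ⟨hxK, fun hxb => hx ⟨hxa.le, hxb⟩⟩
  have hsplit := measureReal_inter_add_sdiff (μ := μ) (s := K) (measurableSet_Iic (a := b))
  calc μ.real (K \ Icc a b) ≤ μ.real ((K ∩ Iic a) ∪ (K \ Iic b)) := measureReal_mono hsub
    _ ≤ μ.real (K ∩ Iic a) + μ.real (K \ Iic b) := measureReal_union_le _ _
    _ < δ := by linarith

theorem exists_isCompact_subset_Ioo_measureReal_eq {K : Set ℝ} (hK : IsCompact K) {w : ℝ}
    (hw0 : 0 ≤ w) (hwK : w < μ.real K) :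
    ∃ E, IsCompact E ∧ E ⊆ K ∩ Ioo (sInf K) (sSup K) ∧ μ.real E = w := by
  obtain ⟨a, b, ha, hb, hab⟩ := exists_measureReal_sdiff_Icc_lt (μ := μ) hK.isBounded
    (sub_pos.2 hwK)
  have hK' := hK.inter_right (isClosed_Icc (a := a) (b := b))
  have hwK' : w ≤ μ.real (K ∩ Icc a b) := by
    have := measureReal_inter_add_sdiff (μ := μ) (s := K) (measurableSet_Icc (a := a) (b := b))
    linarith
  obtain ⟨v, hv⟩ := exists_measureReal_inter_Iic_eq hK'.isBounded ⟨hw0, hwK'⟩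
  exact ⟨_, hK'.inter_right isClosed_Iic,
    fun x hx => ⟨hx.1.1, ha.trans_le hx.1.2.1, hx.1.2.2.trans_lt hb⟩, hv⟩

theorem exists_subset_measureReal_eq_abs_setIntegral_sub_le {K K' S : Set ℝ} {f : ℝ → ℝ}
    {M : ℝ} (hK' : MeasurableSet K') (hK'b : Bornology.IsBounded K') (hK'K : K' ⊆ K)
    (hS : MeasurableSet S) (hSK : S ⊆ K) (hSK' : μ.real S ≤ μ.real K')
    (hf : IntegrableOn f K μ) (hM0 : 0 ≤ M) (hM : ∀ x ∈ K, ‖f x‖ ≤ M) :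
    ∃ S' ⊆ K', MeasurableSet S' ∧ μ.real S' = μ.real S ∧
      |∫ x in S', f x ∂μ - ∫ x in S, f x ∂μ| ≤ 2 * M * μ.real (K \ K') := by
  have hS₁ := measureReal_inter_add_sdiff (μ := μ) (s := S) hK'
  have hK'₁ := measureReal_inter_add_sdiff (μ := μ) (s := K') hS
  rw [inter_comm] at hK'₁
  obtain ⟨v, hv⟩ := exists_measureReal_inter_Iic_eq (μ := μ) (hK'b.subset sdiff_subset)
    (β := μ.real (S \ K')) ⟨measureReal_nonneg, by linarith⟩
  set D := (K' \ S) ∩ Iic v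
  have hD : MeasurableSet D := (hK'.diff hS).inter measurableSet_Iic
  have hDK' : D ⊆ K' := inter_subset_left.trans sdiff_subset
  have hdisj : Disjoint (S ∩ K') D := disjoint_left.2 fun x hx hxD => hxD.1.2 hx.1
  have hbound : ∀ T ⊆ K, |∫ x in T, f x ∂μ| ≤ M * μ.real T := fun T hT =>
    norm_setIntegral_le_of_norm_le_const (measure_lt_top μ T) fun x hx => hM x (hT hx)
  have hD_int := hbound D (hDK'.trans hK'K)
  have hSK'_int := hbound (S \ K') (sdiff_subset.trans hSK)
  rw [hv] at hD_int
  refine ⟨(S ∩ K') ∪ D, union_subset inter_subset_right hDK', (hS.inter hK').union hD, ?_, ?_⟩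
  · rw [measureReal_union hdisj hD, hv]
    linarith
  · rw [setIntegral_union hdisj hD (hf.mono_set (inter_subset_left.trans hSK))
      (hf.mono_set (hDK'.trans hK'K)), ← integral_inter_add_sdiff hK' (hf.mono_set hSK)]
    calc _ = |∫ x in D, f x ∂μ - ∫ x in S \ K', f x ∂μ| := by ring_nf
      _ ≤ |∫ x in D, f x ∂μ| + |∫ x in S \ K', f x ∂μ| := abs_sub _ _
      _ ≤ 2 * M * μ.real (S \ K') := by linarith
      _ ≤ 2 * M * μ.real (K \ K') := mul_le_mul_of_nonneg_left
        (measureReal_mono (sdiff_subset_sdiff_left hSK) (measure_ne_top μ _)) (by positivity)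

end AtomlessReal

theorem exists_lipschitzWith_comp_eq {X : Type*} [Nonempty X] {m H : X → ℝ} {M : ℝ≥0}
    (h : ∀ s t, dist (H s) (H t) ≤ M * dist (m s) (m t)) :
    ∃ G : ℝ → ℝ, LipschitzWith M G ∧ ∀ t, H t = G (m t) := by
  have hinv : ∀ t, H (Function.invFun m (m t)) = H t := fun t =>
    dist_le_zero.1 <| by simpa [Function.invFun_eq ⟨t, rfl⟩] using h (Function.invFun m (m t)) t
  obtain ⟨G, hG, hEq⟩ := (LipschitzOnWith.of_dist_le_mul (f := H ∘ Function.invFun m)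
    (s := range m) <| by
      rintro _ ⟨s, rfl⟩ _ ⟨t, rfl⟩
      simpa only [Function.comp_apply, hinv] using h s t).extend_real
  exact ⟨G, hG, fun t => by rw [← hEq (mem_range_self t), Function.comp_apply, hinv]⟩

/-- In the application, `G x` is the integral of `f` over the part of mass `x` with the lowest
values below the cap `{f = κ}`; `q` is the mass below the cap and `p` the mass of the cap. The
first family is such a lower part together with a piece of the cap of mass `w - x`, the second a
window of mass `w - p` together with the whole cap. The two meet at `x = max (w - p) 0` and run
from the set of measure `w` with the lowest values of `f` (`hbot`) to the one with the highest
values (`htop`). -/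
theorem exists_zero_of_continuous_path {G : ℝ → ℝ} (hG : Continuous G) (hG0 : G 0 = 0)
    {κ p q w : ℝ} (hp : 0 ≤ p) (hq : 0 ≤ q) (hw : 0 ≤ w) (hwpq : w ≤ q + p)
    (hbot : G (min w q) + κ * (w - min w q) < 0)
    (htop : 0 < G q - G (q - (w - min w p)) + κ * min w p) :
    (∃ x ∈ Ico (max (w - p) 0) (min w q), G x + κ * (w - x) = 0) ∨
      (p < w ∧ ∃ x ∈ Ico 0 (q - (w - p)), G (x + (w - p)) - G x + κ * p = 0) := by
  have hcorner_le : max (w - p) 0 ≤ min w q :=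
    max_le (le_min (by linarith) (by linarith)) (le_min hw hq)
  by_cases hcorner : 0 ≤ G (max (w - p) 0) + κ * (w - max (w - p) 0)
  · obtain ⟨x, hx, hx0⟩ := intermediate_value_Icc' hcorner_le
      (by fun_prop : Continuous fun x => G x + κ * (w - x)).continuousOn ⟨hbot.le, hcorner⟩
    exact Or.inl ⟨x, ⟨hx.1, hx.2.lt_of_ne (by rintro rfl; linarith)⟩, hx0⟩
  have hpw : p < w := by
    by_contra! hwp
    rw [max_eq_right (by linarith), hG0, zero_add, sub_zero] at hcorner
    rw [min_eq_left hwp, sub_self, sub_zero, sub_self, zero_add] at htop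
    exact hcorner htop.le
  rw [max_eq_left (by linarith), sub_sub_cancel] at hcorner
  rw [min_eq_right hpw.le] at htop
  have hstart : G (0 + (w - p)) - G 0 + κ * p < 0 := by
    rw [zero_add, hG0, sub_zero]
    exact not_le.1 hcorner
  have hend : 0 < G (q - (w - p) + (w - p)) - G (q - (w - p)) + κ * p := by
    rwa [sub_add_cancel]
  obtain ⟨x, hx, hx0⟩ := intermediate_value_Icc (show (0 : ℝ) ≤ q - (w - p) by linarith)
    (by fun_prop : Continuous fun x => G (x + (w - p)) - G x + κ * p).continuousOn
    ⟨hstart.le, hend.le⟩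
  exact Or.inr ⟨hpw, x, ⟨hx.1, hx.2.lt_of_ne (by rintro rfl; linarith)⟩, hx0⟩

structure CappedAtomless (μ : Measure ℝ) (L : Set ℝ) (f : ℝ → ℝ) (κ : ℝ) : Prop where
  isCompact : IsCompact L
  continuousOn : ContinuousOn f L
  le_cap : ∀ x ∈ L, f x ≤ κ
  measure_level : ∀ y < κ, μ (L ∩ f ⁻¹' {y}) = 0

def capSet (L : Set ℝ) (f : ℝ → ℝ) (κ : ℝ) : Set ℝ := L ∩ f ⁻¹' {κ}

/-- The cap `{f = κ}` is left out so that the measure of `lowerPart L f κ t` is continuous in `t`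
also at `t = κ`. -/
def lowerPart (L : Set ℝ) (f : ℝ → ℝ) (κ t : ℝ) : Set ℝ := (L ∩ f ⁻¹' Iic t) \ capSet L f κ

/-- Integrals over lower parts, reparametrised by their mass: the quantiles of `f` need not be
unique, but the integral of `f` over a lower part only depends on its mass. -/
def IsMassProfile (μ : Measure ℝ) (L : Set ℝ) (f : ℝ → ℝ) (κ : ℝ) (G : ℝ → ℝ) : Prop :=
  Continuous G ∧ ∀ t, ∫ x in lowerPart L f κ t, f x ∂μ = G (μ.real (lowerPart L f κ t))

section Capped

variable {μ : Measure ℝ} {L : Set ℝ} {f : ℝ → ℝ} {κ : ℝ}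

theorem lowerPart_subset (t : ℝ) : lowerPart L f κ t ⊆ L := sdiff_subset.trans inter_subset_left

theorem lowerPart_mono : Monotone (lowerPart L f κ) :=
  fun _ _ hst _ hx => ⟨⟨hx.1.1, le_trans hx.1.2 hst⟩, hx.2⟩

theorem disjoint_lowerPart_capSet (t : ℝ) : Disjoint (lowerPart L f κ t) (capSet L f κ) :=
  disjoint_sdiff_left

theorem lowerPart_eq_of_lt {τ : ℝ} (hτ : τ < κ) : lowerPart L f κ τ = L ∩ f ⁻¹' Iic τ :=
  sdiff_eq_left.2 <| disjoint_left.2 fun x hx hxA => by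
    have hfx : f x = κ := hxA.2
    exact (hx.2.trans_lt hτ).ne hfx

theorem le_of_mem_sdiff_lowerPart {τ x : ℝ} (hτ : τ ≤ κ) (hx : x ∈ L \ lowerPart L f κ τ) :
    τ ≤ f x := by
  by_contra! hlt
  exact hx.2 ⟨⟨hx.1, hlt.le⟩, fun hxA => (hlt.trans_le hτ).ne (hxA.2 : f x = κ)⟩

theorem setIntegral_eq_of_subset_capSet {C : Set ℝ} (hC : MeasurableSet C)
    (hCA : C ⊆ capSet L f κ) : ∫ x in C, f x ∂μ = κ * μ.real C := by
  rw [setIntegral_congr_fun hC fun x hx => (hCA hx).2, setIntegral_const, smul_eq_mul, mul_comm]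

namespace CappedAtomless

theorem mono (h : CappedAtomless μ L f κ) {L' : Set ℝ} (hL' : IsCompact L') (hL'L : L' ⊆ L) :
    CappedAtomless μ L' f κ :=
  ⟨hL', h.continuousOn.mono hL'L, fun x hx => h.le_cap x (hL'L hx),
    fun y hy => measure_mono_null (inter_subset_inter_left _ hL'L) (h.measure_level y hy)⟩

theorem isCompact_inter_preimage (h : CappedAtomless μ L f κ) {C : Set ℝ} (hC : IsClosed C) :
    IsCompact (L ∩ f ⁻¹' C) :=
  h.isCompact.of_isClosed_subset
    (h.continuousOn.preimage_isClosed_of_isClosed h.isCompact.isClosed hC) inter_subset_left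

theorem isCompact_capSet (h : CappedAtomless μ L f κ) : IsCompact (capSet L f κ) :=
  h.isCompact_inter_preimage isClosed_singleton

theorem measurableSet_lowerPart (h : CappedAtomless μ L f κ) (t : ℝ) :
    MeasurableSet (lowerPart L f κ t) :=
  (h.isCompact_inter_preimage isClosed_Iic).measurableSet.diff h.isCompact_capSet.measurableSet

theorem lowerPart_union_capSet (h : CappedAtomless μ L f κ) :
    lowerPart L f κ κ ∪ capSet L f κ = L := by
  have hA : capSet L f κ ⊆ L ∩ f ⁻¹' Iic κ := fun x hx => ⟨hx.1, (hx.2 : f x = κ).le⟩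
  rw [lowerPart, sdiff_union_self, union_eq_left.2 hA]
  exact inter_eq_left.2 fun x hx => h.le_cap x hx

theorem exists_lowerPart_eq_empty (h : CappedAtomless μ L f κ) : ∃ t₀, lowerPart L f κ t₀ = ∅ := by
  obtain ⟨b, hb⟩ := h.isCompact.bddBelow_image h.continuousOn
  refine ⟨b - 1, eq_empty_of_forall_notMem fun x hx => ?_⟩
  have hbx : b ≤ f x := hb (mem_image_of_mem f hx.1.1)
  have hxb : f x ≤ b - 1 := hx.1.2
  linarith

theorem inter_preimage_Icc_union_ae_eq (h : CappedAtomless μ L f κ) {s : ℝ} (hs : s < κ)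
    (t : ℝ) : (L ∩ f ⁻¹' (Icc s t ∪ {κ}) : Set ℝ) =ᵐ[μ]
      ((lowerPart L f κ t \ lowerPart L f κ s) ∪ capSet L f κ : Set ℝ) := by
  have hsub : (L ∩ f ⁻¹' (Icc s t ∪ {κ})) \
      ((lowerPart L f κ t \ lowerPart L f κ s) ∪ capSet L f κ) ⊆ L ∩ f ⁻¹' {s} := by
    rintro x ⟨⟨hxL, hfx⟩, hxW⟩
    have hxA : x ∉ capSet L f κ := fun hxA => hxW (Or.inr hxA)
    rcases hfx with ⟨h₁, h₂⟩ | hκ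
    · have hxs : x ∈ lowerPart L f κ s :=
        not_not.1 fun hn => hxW (Or.inl ⟨⟨⟨hxL, h₂⟩, hxA⟩, hn⟩)
      exact ⟨hxL, le_antisymm hxs.1.2 h₁⟩
    · exact absurd ⟨hxL, hκ⟩ hxA
  have hsup : (lowerPart L f κ t \ lowerPart L f κ s) ∪ capSet L f κ ⊆
      L ∩ f ⁻¹' (Icc s t ∪ {κ}) := by
    rintro x (⟨⟨⟨hxL, hxt⟩, hxA⟩, hxs⟩ | hxA)
    · exact ⟨hxL, Or.inl ⟨not_lt.1 fun hlt => hxs ⟨⟨hxL, hlt.le⟩, hxA⟩, hxt⟩⟩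
    · exact ⟨hxA.1, Or.inr hxA.2⟩
  rw [ae_eq_set, sdiff_eq_empty.2 hsup, measure_empty]
  exact ⟨measure_mono_null hsub (h.measure_level s hs), rfl⟩

theorem map_zero_of_isMassProfile (h : CappedAtomless μ L f κ) {G : ℝ → ℝ}
    (hG : IsMassProfile μ L f κ G) : G 0 = 0 := by
  obtain ⟨t₀, ht₀⟩ := h.exists_lowerPart_eq_empty
  simpa [ht₀] using (hG.2 t₀).symm

variable [IsFiniteMeasure μ]

theorem measureReal_eq_lowerPart_add_capSet (h : CappedAtomless μ L f κ) :
    μ.real L = μ.real (lowerPart L f κ κ) + μ.real (capSet L f κ) := by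
  rw [← measureReal_union (disjoint_lowerPart_capSet κ) h.isCompact_capSet.measurableSet,
    h.lowerPart_union_capSet]

theorem continuous_measureReal_lowerPart (h : CappedAtomless μ L f κ) :
    Continuous fun t => μ.real (lowerPart L f κ t) := by
  have hR : MeasurableSet (L \ capSet L f κ) :=
    h.isCompact.measurableSet.diff h.isCompact_capSet.measurableSet
  have hf : AEMeasurable f (μ.restrict (L \ capSet L f κ)) :=
    (h.continuousOn.aemeasurable h.isCompact.measurableSet).mono_measure
      (Measure.restrict_mono sdiff_subset le_rfl)
  have hpre : ∀ C, f ⁻¹' C ∩ (L \ capSet L f κ) = (L ∩ f ⁻¹' C) \ capSet L f κ := fun C => by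
    ext x; simp only [capSet, mem_inter_iff, Set.mem_sdiff, mem_preimage]; tauto
  have : NullSingletonClass ((μ.restrict (L \ capSet L f κ)).map f) := ⟨fun y => by
    rw [Measure.map_apply_of_aemeasurable hf (measurableSet_singleton y),
      Measure.restrict_apply' hR, hpre]
    rcases lt_or_ge y κ with hy | hy
    · exact measure_mono_null sdiff_subset (h.measure_level y hy)
    · convert measure_empty (μ := μ)
      refine eq_empty_of_forall_notMem fun x hx => hx.2 ⟨hx.1.1, ?_⟩
      exact le_antisymm (h.le_cap x hx.1.1) (hx.1.2 ▸ hy)⟩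
  refine (continuous_measureReal_Iic (μ := (μ.restrict (L \ capSet L f κ)).map f)).congr fun t => ?_
  rw [map_measureReal_apply_of_aemeasurable hf measurableSet_Iic, measureReal_restrict_apply' hR,
    hpre, lowerPart]

theorem exists_le_measureReal_lowerPart_eq (h : CappedAtomless μ L f κ)
    (s : ℝ) {x : ℝ} (hx : x ∈ Icc 0 (μ.real (lowerPart L f κ s))) :
    ∃ τ ≤ s, μ.real (lowerPart L f κ τ) = x := by
  obtain ⟨t₀, ht₀⟩ := h.exists_lowerPart_eq_empty
  have h₀ : μ.real (lowerPart L f κ (min t₀ s)) = 0 := by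
    rw [subset_empty_iff.1 ((lowerPart_mono (min_le_left t₀ s)).trans ht₀.subset),
      measureReal_empty]
  obtain ⟨τ, hτ, hτx⟩ := intermediate_value_Icc (min_le_right t₀ s)
    h.continuous_measureReal_lowerPart.continuousOn (h₀ ▸ hx)
  exact ⟨τ, hτ.2, hτx⟩

theorem exists_isMassProfile (h : CappedAtomless μ L f κ) :
    ∃ G, IsMassProfile μ L f κ G := by
  obtain ⟨M, hM⟩ := h.isCompact.exists_bound_of_continuousOn h.continuousOn
  have hfL := h.continuousOn.integrableOn_compact (μ := μ) h.isCompact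
  have hlip : ∀ s t, s ≤ t →
      dist (∫ x in lowerPart L f κ s, f x ∂μ) (∫ x in lowerPart L f κ t, f x ∂μ) ≤
        M.toNNReal * dist (μ.real (lowerPart L f κ s)) (μ.real (lowerPart L f κ t)) := by
    intro s t hst
    have hsub := lowerPart_mono (L := L) (f := f) (κ := κ) hst
    rw [dist_comm, dist_comm (μ.real _), Real.dist_eq, Real.dist_eq,
      ← setIntegral_sdiff (h.measurableSet_lowerPart s) (hfL.mono_set (lowerPart_subset t)) hsub,
      ← measureReal_sdiff hsub (h.measurableSet_lowerPart s), abs_of_nonneg measureReal_nonneg]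
    exact norm_setIntegral_le_of_norm_le_const (measure_lt_top μ _) fun x hx =>
      (hM x (lowerPart_subset t hx.1)).trans (Real.le_coe_toNNReal M)
  obtain ⟨G, hG, hHG⟩ := exists_lipschitzWith_comp_eq (X := ℝ) fun s t => by
    rcases le_total s t with hst | hts
    · exact hlip s t hst
    · rw [dist_comm, dist_comm (μ.real _)]
      exact hlip t s hts
  exact ⟨G, hG.continuous, hHG⟩

theorem setIntegral_eq_of_isMassProfile (h : CappedAtomless μ L f κ) {G : ℝ → ℝ}
    (hG : IsMassProfile μ L f κ G) :
    ∫ x in L, f x ∂μ = G (μ.real (lowerPart L f κ κ)) + κ * μ.real (capSet L f κ) := by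
  have hfL := h.continuousOn.integrableOn_compact (μ := μ) h.isCompact
  conv_lhs => rw [← h.lowerPart_union_capSet]
  rw [setIntegral_union (disjoint_lowerPart_capSet κ) h.isCompact_capSet.measurableSet
    (hfL.mono_set (lowerPart_subset κ)) (hfL.mono_set inter_subset_left), hG.2,
    setIntegral_eq_of_subset_capSet h.isCompact_capSet.measurableSet subset_rfl]

theorem exists_isCompact_window_union_capSet (h : CappedAtomless μ L f κ) {G : ℝ → ℝ}
    (hG : IsMassProfile μ L f κ G) {a b : ℝ} (ha : 0 ≤ a) (hab : a ≤ b)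
    (hb : b ≤ μ.real (lowerPart L f κ κ)) (haq : a < μ.real (lowerPart L f κ κ)) :
    ∃ E, IsCompact E ∧ E ⊆ L ∧ μ.real E = b - a + μ.real (capSet L f κ) ∧
      ∫ y in E, f y ∂μ = G b - G a + κ * μ.real (capSet L f κ) := by
  have hfL := h.continuousOn.integrableOn_compact (μ := μ) h.isCompact
  have hA := h.isCompact_capSet.measurableSet
  obtain ⟨τb, hτbκ, hτb⟩ := h.exists_le_measureReal_lowerPart_eq κ ⟨ha.trans hab, hb⟩
  obtain ⟨τa, hτab, hτa⟩ := h.exists_le_measureReal_lowerPart_eq τb ⟨ha, hτb ▸ hab⟩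
  have hτaκ : τa < κ := (hτab.trans hτbκ).lt_of_ne (by rintro rfl; exact haq.ne hτa.symm)
  have hdisj : Disjoint (lowerPart L f κ τb \ lowerPart L f κ τa) (capSet L f κ) :=
    (disjoint_lowerPart_capSet τb).mono_left sdiff_subset
  have hW := h.inter_preimage_Icc_union_ae_eq hτaκ τb
  refine ⟨L ∩ f ⁻¹' (Icc τa τb ∪ {κ}),
    h.isCompact_inter_preimage (isClosed_Icc.union isClosed_singleton), inter_subset_left, ?_, ?_⟩
  · rw [measureReal_congr hW, measureReal_union hdisj hA,
      measureReal_sdiff (lowerPart_mono hτab) (h.measurableSet_lowerPart τa), hτa, hτb]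
  · rw [setIntegral_congr_set hW, setIntegral_union hdisj hA
      (hfL.mono_set (sdiff_subset.trans (lowerPart_subset τb))) (hfL.mono_set inter_subset_left),
      setIntegral_sdiff (h.measurableSet_lowerPart τa) (hfL.mono_set (lowerPart_subset τb))
        (lowerPart_mono hτab), hG.2, hG.2, hτa, hτb, setIntegral_eq_of_subset_capSet hA subset_rfl]

variable [NullSingletonClass μ]

theorem exists_isCompact_subset_capSet (h : CappedAtomless μ L f κ) {β : ℝ}
    (hβ : β ∈ Icc 0 (μ.real (capSet L f κ))) :
    ∃ C, IsCompact C ∧ C ⊆ capSet L f κ ∧ μ.real C = β := by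
  obtain ⟨v, hv⟩ := exists_measureReal_inter_Iic_eq h.isCompact_capSet.isBounded hβ
  exact ⟨_, h.isCompact_capSet.inter_right isClosed_Iic, inter_subset_left, hv⟩

theorem exists_isCompact_lowerPart_union (h : CappedAtomless μ L f κ) {G : ℝ → ℝ}
    (hG : IsMassProfile μ L f κ G) {x β : ℝ} (hx : x ∈ Ico 0 (μ.real (lowerPart L f κ κ)))
    (hβ : β ∈ Icc 0 (μ.real (capSet L f κ))) :
    ∃ E, IsCompact E ∧ E ⊆ L ∧ μ.real E = x + β ∧ ∫ y in E, f y ∂μ = G x + κ * β := by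
  have hfL := h.continuousOn.integrableOn_compact (μ := μ) h.isCompact
  obtain ⟨τ, hτκ, hτx⟩ := h.exists_le_measureReal_lowerPart_eq κ (Ico_subset_Icc_self hx)
  have hτ : τ < κ := hτκ.lt_of_ne (by rintro rfl; exact hx.2.ne hτx.symm)
  obtain ⟨C, hC, hCA, hCβ⟩ := h.exists_isCompact_subset_capSet hβ
  have hdisj : Disjoint (lowerPart L f κ τ) C := (disjoint_lowerPart_capSet τ).mono_right hCA
  refine ⟨lowerPart L f κ τ ∪ C, ?_, union_subset (lowerPart_subset τ)
    (hCA.trans inter_subset_left), ?_, ?_⟩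
  · rw [lowerPart_eq_of_lt hτ]
    exact (h.isCompact_inter_preimage isClosed_Iic).union hC
  · rw [measureReal_union hdisj hC.measurableSet, hτx, hCβ]
  · rw [setIntegral_union hdisj hC.measurableSet (hfL.mono_set (lowerPart_subset τ))
      (hfL.mono_set (hCA.trans inter_subset_left)), hG.2 τ, hτx,
      setIntegral_eq_of_subset_capSet hC.measurableSet hCA, hCβ]

theorem exists_bottom_set (h : CappedAtomless μ L f κ) {G : ℝ → ℝ} (hG : IsMassProfile μ L f κ G)
    {w : ℝ} (hw : w ∈ Icc 0 (μ.real L)) :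
    ∃ B θ, MeasurableSet B ∧ B ⊆ L ∧ μ.real B = w ∧ (∀ x ∈ B, f x ≤ θ) ∧
      (∀ x ∈ L \ B, θ ≤ f x) ∧
      ∫ x in B, f x ∂μ = G (min w (μ.real (lowerPart L f κ κ))) +
        κ * (w - min w (μ.real (lowerPart L f κ κ))) := by
  have hfL := h.continuousOn.integrableOn_compact (μ := μ) h.isCompact
  have hLpq := h.measureReal_eq_lowerPart_add_capSet
  rcases le_total w (μ.real (lowerPart L f κ κ)) with hwq | hqw
  · obtain ⟨τ, hτκ, hτw⟩ := h.exists_le_measureReal_lowerPart_eq κ ⟨hw.1, hwq⟩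
    refine ⟨lowerPart L f κ τ, τ, h.measurableSet_lowerPart τ, lowerPart_subset τ, hτw,
      fun x hx => hx.1.2, fun x hx => le_of_mem_sdiff_lowerPart hτκ hx, ?_⟩
    rw [min_eq_left hwq, hG.2, hτw, sub_self, mul_zero, add_zero]
  · obtain ⟨C, hC, hCA, hCw⟩ := h.exists_isCompact_subset_capSet
      (β := w - μ.real (lowerPart L f κ κ)) ⟨by linarith, by linarith [hw.2]⟩
    have hdisj : Disjoint (lowerPart L f κ κ) C := (disjoint_lowerPart_capSet κ).mono_right hCA
    have hCL : C ⊆ L := hCA.trans inter_subset_left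
    refine ⟨lowerPart L f κ κ ∪ C, κ, (h.measurableSet_lowerPart κ).union hC.measurableSet,
      union_subset (lowerPart_subset κ) hCL, ?_, fun x hx => h.le_cap x ((union_subset
      (lowerPart_subset κ) hCL) hx), fun x hx => le_of_mem_sdiff_lowerPart le_rfl
      ⟨hx.1, fun hx' => hx.2 (Or.inl hx')⟩, ?_⟩
    · rw [measureReal_union hdisj hC.measurableSet, hCw]
      ring
    · rw [setIntegral_union hdisj hC.measurableSet (hfL.mono_set (lowerPart_subset κ))
        (hfL.mono_set hCL), hG.2, setIntegral_eq_of_subset_capSet hC.measurableSet hCA, hCw,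
        min_eq_right hqw]

theorem exists_top_set (h : CappedAtomless μ L f κ) {G : ℝ → ℝ} (hG : IsMassProfile μ L f κ G)
    {w : ℝ} (hw : w ∈ Icc 0 (μ.real L)) :
    ∃ T θ, MeasurableSet T ∧ T ⊆ L ∧ μ.real T = w ∧ (∀ x ∈ T, θ ≤ f x) ∧
      (∀ x ∈ L \ T, f x ≤ θ) ∧
      ∫ x in T, f x ∂μ = G (μ.real (lowerPart L f κ κ)) -
        G (μ.real (lowerPart L f κ κ) - (w - min w (μ.real (capSet L f κ)))) +
        κ * min w (μ.real (capSet L f κ)) := by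
  have hfL := h.continuousOn.integrableOn_compact (μ := μ) h.isCompact
  have hLpq := h.measureReal_eq_lowerPart_add_capSet
  rcases le_total w (μ.real (capSet L f κ)) with hwp | hpw
  · obtain ⟨C, hC, hCA, hCw⟩ := h.exists_isCompact_subset_capSet ⟨hw.1, hwp⟩
    refine ⟨C, κ, hC.measurableSet, hCA.trans inter_subset_left, hCw,
      fun x hx => (hCA hx).2.symm.le, fun x hx => h.le_cap x hx.1, ?_⟩
    rw [setIntegral_eq_of_subset_capSet hC.measurableSet hCA, hCw, min_eq_left hwp, sub_self,
      sub_zero, sub_self, zero_add]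
  · obtain ⟨τ, hτκ, hτw⟩ := h.exists_le_measureReal_lowerPart_eq κ
      (x := μ.real (lowerPart L f κ κ) - (w - μ.real (capSet L f κ)))
      ⟨by linarith [hw.2], by linarith⟩
    refine ⟨L \ lowerPart L f κ τ, τ, h.isCompact.measurableSet.diff
      (h.measurableSet_lowerPart τ), sdiff_subset, ?_,
      fun x hx => le_of_mem_sdiff_lowerPart hτκ hx,
      fun x hx => (not_not.1 fun hn => hx.2 ⟨hx.1, hn⟩).1.2, ?_⟩
    · rw [measureReal_sdiff (lowerPart_subset τ) (h.measurableSet_lowerPart τ), hτw]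
      linarith
    · rw [setIntegral_sdiff (h.measurableSet_lowerPart τ) hfL (lowerPart_subset τ),
        h.setIntegral_eq_of_isMassProfile hG, hG.2, hτw, min_eq_right hpw]
      ring

theorem exists_isCompact_setIntegral_eq_zero (h : CappedAtomless μ L f κ) {Y Z : Set ℝ}
    (hY : MeasurableSet Y) (hYL : Y ⊆ L) (hZ : MeasurableSet Z) (hZL : Z ⊆ L)
    (hYZ : μ.real Y = μ.real Z) (hYneg : ∫ x in Y, f x ∂μ < 0)
    (hZpos : 0 < ∫ x in Z, f x ∂μ) :
    ∃ E, IsCompact E ∧ E ⊆ L ∧ μ.real E = μ.real Y ∧ ∫ x in E, f x ∂μ = 0 := by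
  have hfL := h.continuousOn.integrableOn_compact (μ := μ) h.isCompact
  obtain ⟨G, hG⟩ := h.exists_isMassProfile
  have hLpq := h.measureReal_eq_lowerPart_add_capSet
  have hw : μ.real Y ∈ Icc 0 (μ.real L) := ⟨measureReal_nonneg, measureReal_mono hYL⟩
  obtain ⟨B, θ, hB, hBL, hBY, hBle, hBge, hBint⟩ := h.exists_bottom_set hG hw
  obtain ⟨T, θ', hT, hTL, hTY, hTge, hTle, hTint⟩ := h.exists_top_set hG hw
  have hbot := hBint ▸ (setIntegral_le_setIntegral_of_measureReal_eq hB hY (hfL.mono_set hBL)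
    (hfL.mono_set hYL) hBY (fun x hx => hBle x hx.1)
    (fun x hx => hBge x ⟨hYL hx.1, hx.2⟩)).trans_lt hYneg
  have htop := hTint ▸ hZpos.trans_le (setIntegral_le_setIntegral_of_measureReal_eq hZ hT
    (hfL.mono_set hZL) (hfL.mono_set hTL) (hTY.trans hYZ).symm
    (fun x hx => hTle x ⟨hZL hx.1, hx.2⟩) (fun x hx => hTge x hx.1))
  rcases exists_zero_of_continuous_path hG.1 (h.map_zero_of_isMassProfile hG) measureReal_nonneg
    measureReal_nonneg measureReal_nonneg (hLpq ▸ hw.2) hbot htop with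
    ⟨x, hx, hx0⟩ | ⟨hpw, x, hx, hx0⟩
  · obtain ⟨E, hE, hEL, hEw, hEint⟩ := h.exists_isCompact_lowerPart_union hG
      (β := μ.real Y - x) ⟨(le_max_right _ _).trans hx.1, hx.2.trans_le (min_le_right _ _)⟩
      ⟨by linarith [hx.2, min_le_left (μ.real Y) (μ.real (lowerPart L f κ κ))],
        by linarith [hx.1, le_max_left (μ.real Y - μ.real (capSet L f κ)) 0]⟩
    exact ⟨E, hE, hEL, by rw [hEw]; ring, hEint.trans hx0⟩
  · obtain ⟨E, hE, hEL, hEw, hEint⟩ := h.exists_isCompact_window_union_capSet hG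
      (a := x) (b := x + (μ.real Y - μ.real (capSet L f κ))) hx.1 (by linarith)
      (by linarith [hx.2]) (by linarith [hx.2])
    exact ⟨E, hE, hEL, by rw [hEw]; ring, hEint.trans hx0⟩

theorem exists_setIntegral_neg_pos (h : CappedAtomless μ L f κ)
    (hmean : ∫ x in L, f x ∂μ = 0) (hf0 : ¬ ∀ᵐ x ∂μ.restrict L, f x = 0) {w : ℝ} (hw0 : 0 < w)
    (hwL : w < μ.real L) :
    ∃ Y Z, MeasurableSet Y ∧ Y ⊆ L ∧ μ.real Y = w ∧ ∫ x in Y, f x ∂μ < 0 ∧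
      MeasurableSet Z ∧ Z ⊆ L ∧ μ.real Z = w ∧ 0 < ∫ x in Z, f x ∂μ := by
  have hfL := h.continuousOn.integrableOn_compact (μ := μ) h.isCompact
  have hL := h.isCompact.measurableSet
  obtain ⟨G, hG⟩ := h.exists_isMassProfile
  obtain ⟨B, θ, hB, hBL, hBw, hBle, hBge, -⟩ := h.exists_bottom_set hG ⟨hw0.le, hwL.le⟩
  obtain ⟨T, θ', hT, hTL, hTw, hTge, hTle, -⟩ := h.exists_top_set hG ⟨hw0.le, hwL.le⟩
  have hcompl : ∀ S ⊆ L, MeasurableSet S → μ.real S = w → 0 < μ.real (L \ S) :=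
    fun S hSL hS hSw => by rw [measureReal_sdiff hSL hS, hSw]; linarith
  refine ⟨B, T, hB, hBL, hBw, setIntegral_neg_of_le_of_le hL hB hBL hfL hmean hBle hBge
    (hBw ▸ hw0) (hcompl B hBL hB hBw) hf0, hT, hTL, hTw, ?_⟩
  have hneg := setIntegral_neg_of_le_of_le (f := fun x => -f x) (θ := -θ') hL hT hTL hfL.neg
    (by rw [integral_neg, hmean, neg_zero]) (fun x hx => neg_le_neg (hTge x hx))
    (fun x hx => neg_le_neg (hTle x hx)) (hTw ▸ hw0) (hcompl T hTL hT hTw)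
    (by simpa only [neg_eq_zero] using hf0)
  rw [integral_neg] at hneg
  linarith

theorem exists_isCompact_subset_Ioo_of_neg_of_pos (h : CappedAtomless μ L f κ) {Y Z : Set ℝ}
    {w : ℝ} (hY : MeasurableSet Y) (hYL : Y ⊆ L) (hYw : μ.real Y = w)
    (hYneg : ∫ x in Y, f x ∂μ < 0) (hZ : MeasurableSet Z) (hZL : Z ⊆ L) (hZw : μ.real Z = w)
    (hZpos : 0 < ∫ x in Z, f x ∂μ) (hwL : w < μ.real L) :
    ∃ E, IsCompact E ∧ E ⊆ L ∩ Ioo (sInf L) (sSup L) ∧ μ.real E = w ∧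
      ∫ x in E, f x ∂μ = 0 := by
  have hfL := h.continuousOn.integrableOn_compact (μ := μ) h.isCompact
  obtain ⟨M₀, hM₀⟩ := h.isCompact.exists_bound_of_continuousOn h.continuousOn
  set M := max M₀ 0
  have hM : ∀ x ∈ L, ‖f x‖ ≤ M := fun x hx => (hM₀ x hx).trans (le_max_left _ _)
  set ε := min (-∫ x in Y, f x ∂μ) (∫ x in Z, f x ∂μ)
  have hε : 0 < ε := lt_min (neg_pos.2 hYneg) hZpos
  obtain ⟨a, b, ha, hb, hab⟩ := exists_measureReal_sdiff_Icc_lt (μ := μ) h.isCompact.isBounded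
    (lt_min (sub_pos.2 hwL) (div_pos hε (by positivity : (0 : ℝ) < 2 * M + 1)))
  set L' := L ∩ Icc a b
  have hL' : IsCompact L' := h.isCompact.inter_right isClosed_Icc
  rw [lt_min_iff, lt_div_iff₀' (by positivity)] at hab
  have hwL' : w < μ.real L' := by
    linarith [measureReal_inter_add_sdiff (μ := μ) (s := L) (measurableSet_Icc (a := a) (b := b))]
  have hsmall : 2 * M * μ.real (L \ L') < ε := by
    rw [sdiff_self_inter]
    nlinarith [measureReal_nonneg (μ := μ) (s := L \ Icc a b)]
  have hmove : ∀ S ⊆ L, MeasurableSet S → μ.real S = w → ∃ S' ⊆ L', MeasurableSet S' ∧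
      μ.real S' = w ∧ |∫ x in S', f x ∂μ - ∫ x in S, f x ∂μ| < ε := fun S hSL hS hSw => by
    obtain ⟨S', hS'L', hS', hS'w, hS'int⟩ := exists_subset_measureReal_eq_abs_setIntegral_sub_le
      hL'.measurableSet hL'.isBounded inter_subset_left hS hSL (hSw ▸ hwL'.le) hfL
      (le_max_right _ _) hM
    exact ⟨S', hS'L', hS', hS'w.trans hSw, hS'int.trans_lt hsmall⟩
  obtain ⟨Y', hY'L', hY', hY'w, hY'int⟩ := hmove Y hYL hY hYw
  obtain ⟨Z', hZ'L', hZ', hZ'w, hZ'int⟩ := hmove Z hZL hZ hZw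
  obtain ⟨E, hE, hEL', hEw, hEint⟩ :=
    (h.mono hL' inter_subset_left).exists_isCompact_setIntegral_eq_zero hY' hY'L' hZ' hZ'L'
      (hY'w.trans hZ'w.symm)
    (by linarith [(abs_lt.1 hY'int).2, min_le_left (-∫ x in Y, f x ∂μ) (∫ x in Z, f x ∂μ)])
    (by linarith [(abs_lt.1 hZ'int).1, min_le_right (-∫ x in Y, f x ∂μ) (∫ x in Z, f x ∂μ)])
  exact ⟨E, hE, fun x hx => ⟨(hEL' hx).1, ha.trans_le (hEL' hx).2.1, (hEL' hx).2.2.trans_lt hb⟩,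
    hEw.trans hY'w, hEint⟩

theorem exists_isCompact_subset_Ioo_setIntegral_eq_zero (h : CappedAtomless μ L f κ)
    (hmean : ∫ x in L, f x ∂μ = 0) {w : ℝ} (hw0 : 0 < w) (hwL : w < μ.real L) :
    ∃ E, IsCompact E ∧ E ⊆ L ∩ Ioo (sInf L) (sSup L) ∧ μ.real E = w ∧
      ∫ x in E, f x ∂μ = 0 := by
  by_cases hf0 : ∀ᵐ x ∂μ.restrict L, f x = 0
  · obtain ⟨E, hE, hEL, hEw⟩ := exists_isCompact_subset_Ioo_measureReal_eq h.isCompact hw0.le hwL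
    exact ⟨E, hE, hEL, hEw, integral_eq_zero_of_ae
      (ae_restrict_of_ae_restrict_of_subset (hEL.trans inter_subset_left) hf0)⟩
  · obtain ⟨Y, Z, hY, hYL, hYw, hYneg, hZ, hZL, hZw, hZpos⟩ :=
      h.exists_setIntegral_neg_pos hmean hf0 hw0 hwL
    exact h.exists_isCompact_subset_Ioo_of_neg_of_pos hY hYL hYw hYneg hZ hZL hZw hZpos hwL

end CappedAtomless

end Capped

theorem stmt6_general (K : Set ℝ) (hK : IsCompact K) (f : ℝ → ℝ) (hcont : ContinuousOn f K)
    (hmean : ∫ x in K, f x = 0) (κ : ℝ)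
    (hlevel : ∀ y < κ, volume (K ∩ f ⁻¹' {y}) = 0)
    (hconst : ∀ x ∈ K, κ ≤ f x → f x = κ)
    (c : ℝ) (hc : c ∈ Set.Ioo 0 (volume K).toReal) :
    ∃ E : Set ℝ, IsCompact E ∧ E ⊆ K ∩ Set.Ioo (sInf K) (sSup K) ∧
      (volume E).toReal = (volume K).toReal - c ∧ (∫ x in E, f x) = 0 := by
  obtain ⟨hc0, hcK⟩ := hc
  rw [← measureReal_def] at hcK
  have : IsFiniteMeasure (volume.restrict K) := isFiniteMeasure_restrict.2 hK.measure_lt_top.ne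
  have h : CappedAtomless (volume.restrict K) K f κ :=
    ⟨hK, hcont, fun x hx => not_lt.1 fun hlt => hlt.ne' (hconst x hx hlt.le),
      fun y hy => nonpos_iff_eq_zero.1 ((Measure.restrict_apply_le K _).trans (hlevel y hy).le)⟩
  obtain ⟨E, hE, hEK, hEw, hEint⟩ := h.exists_isCompact_subset_Ioo_setIntegral_eq_zero
    (by rwa [Measure.restrict_restrict_of_subset subset_rfl]) (w := volume.real K - c)
    (by linarith) (by rw [measureReal_restrict_apply_self]; linarith)
  have hEK' : E ⊆ K := hEK.trans inter_subset_left
  refine ⟨E, hE, hEK, ?_, ?_⟩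
  · rwa [measureReal_restrict_apply hE.measurableSet, inter_eq_left.2 hEK'] at hEw
  · rwa [Measure.restrict_restrict_of_subset hEK'] at hEint

theorem stmt6 (K : Set ℝ) (hK : IsCompact K) (hK1 : K ⊆ Set.Icc 0 1)
    (hKpos : 0 < volume K) (f : ℝ → ℝ) (hcont : ContinuousOn f K)
    (hmean : ∫ x in K, f x = 0) (κ : ℝ)
    (hlevel : ∀ y < κ, volume (K ∩ f ⁻¹' {y}) = 0)
    (hconst : ∀ x ∈ K, κ ≤ f x → f x = κ)
    (c : ℝ) (hc : c ∈ Set.Ioo 0 (volume K).toReal) :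
    ∃ E : Set ℝ, IsCompact E ∧ E ⊆ K ∩ Set.Ioo (sInf K) (sSup K) ∧
      (volume E).toReal = (volume K).toReal - c ∧ (∫ x in E, f x) = 0 :=
  stmt6_general K hK f hcont hmean κ hlevel hconst c hc
end

section
/- Let $a \in (0,1)$, $\alpha, \beta \in \mathbb{R}$, and $f = \alpha\chi_{[0,a)} + \beta\chi_{[a,1)}$ with $\int_0^1 f\,d\lambda = 0$. Then there exists $g \in L_\infty[0,1)$ with $\|g\|_\infty \leq \|f\|_\infty$ and a Lebesgue measure preserving bijection $T$ of $[0,1)$ such that $f = g \circ T - g$ almost everywhere. -/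
/-!
The mean-zero condition `α a + β (1 - a) = 0` says `α = c (1 - a)` and `β = -c a` for one
constant `c`. The rotation `T t = t - a (mod 1)` of `[0, 1)` moves points of `[0, a)` by `1 - a`
and points of `[a, 1)` by `-a`, so its displacement `T t - t` is exactly `f / c`. Hence
`g t = c (t - 1/2)` solves `g ∘ T - g = f`, and
`‖g‖∞ = |c| / 2 ≤ |c| max (a, 1 - a) = ‖f‖∞`.
-/

open MeasureTheory Set

theorem enorm_le_eLpNorm_top_of_forall_mem {α E : Type*} [MeasurableSpace α]
    [ENorm E] {μ : Measure α} {f : α → E} {s : Set α} {v : E} (hs : μ s ≠ 0)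
    (hf : ∀ x ∈ s, f x = v) : ‖v‖ₑ ≤ eLpNorm f ⊤ μ := by
  obtain ⟨x, hxs, hx⟩ :=
    Measure.exists_mem_of_measure_ne_zero_of_ae hs
      (ae_restrict_of_ae (ae_le_eLpNormEssSup (f := f)))
  rw [eLpNorm_exponent_top, ← hf x hxs]
  exact hx

theorem map_add_const_volume_restrict (c : ℝ) (s : Set ℝ) :
    (volume.restrict s).map (· + c) = volume.restrict ((· + c) '' s) :=
  ((measurePreserving_add_right volume c).restrict_image_emb
    (measurableEmbedding_addRight c) s).map_eq

/-- On `[0, 1)`, the rotation of the circle `ℝ / ℤ` by `-a`. -/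
noncomputable def rotateIco (a t : ℝ) : ℝ := if t < a then t + (1 - a) else t - a

section rotateIco

variable {a t : ℝ}

theorem rotateIco_of_lt (h : t < a) : rotateIco a t = t + (1 - a) := if_pos h

theorem rotateIco_of_le (h : a ≤ t) : rotateIco a t = t - a := if_neg (not_lt.2 h)

theorem measurable_rotateIco (a : ℝ) : Measurable (rotateIco a) :=
  Measurable.ite (measurableSet_lt measurable_id measurable_const)
    (measurable_id.add_const _) (measurable_id.sub_const _)

theorem mapsTo_rotateIco (ha0 : 0 ≤ a) (ha1 : a ≤ 1) :
    MapsTo (rotateIco a) (Ico 0 1) (Ico 0 1) := by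
  rintro t ⟨ht0, ht1⟩
  rcases lt_or_ge t a with h | h
  · rw [rotateIco_of_lt h]; constructor <;> linarith
  · rw [rotateIco_of_le h]; constructor <;> linarith

theorem rotateIco_one_sub_rotateIco (ht : t ∈ Ico 0 1) :
    rotateIco (1 - a) (rotateIco a t) = t := by
  rcases lt_or_ge t a with h | h
  · rw [rotateIco_of_lt h, rotateIco_of_le (by linarith [ht.1])]; ring
  · rw [rotateIco_of_le h, rotateIco_of_lt (by linarith [ht.2])]; ring

theorem bijOn_rotateIco (ha0 : 0 ≤ a) (ha1 : a ≤ 1) :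
    BijOn (rotateIco a) (Ico 0 1) (Ico 0 1) := by
  refine InvOn.bijOn (f' := rotateIco (1 - a)) ⟨fun t ht => ?_, fun t ht => ?_⟩
    (mapsTo_rotateIco ha0 ha1) (mapsTo_rotateIco (by linarith) (by linarith))
  · exact rotateIco_one_sub_rotateIco ht
  · simpa using rotateIco_one_sub_rotateIco (a := 1 - a) ht

theorem measurePreserving_rotateIco (ha0 : 0 ≤ a) (ha1 : a ≤ 1) :
    MeasurePreserving (rotateIco a) (volume.restrict (Ico 0 1)) (volume.restrict (Ico 0 1)) := by
  refine ⟨measurable_rotateIco a, ?_⟩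
  have hsplit : ∀ b, 0 ≤ b → b ≤ 1 → volume.restrict (Ico (0:ℝ) 1) =
      volume.restrict (Ico 0 b) + volume.restrict (Ico b 1) := fun b hb0 hb1 => by
    rw [← Measure.restrict_union Ico_disjoint_Ico_same measurableSet_Ico,
      Ico_union_Ico_eq_Ico hb0 hb1]
  have hleft :
      (volume.restrict (Ico 0 a)).map (rotateIco a) = volume.restrict (Ico (1 - a) 1) := by
    rw [Measure.map_congr (g := (· + (1 - a)))
      (ae_restrict_of_forall_mem measurableSet_Ico fun t ht => rotateIco_of_lt ht.2),
      map_add_const_volume_restrict, image_add_const_Ico]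
    congr 2 <;> ring
  have hright :
      (volume.restrict (Ico a 1)).map (rotateIco a) = volume.restrict (Ico 0 (1 - a)) := by
    rw [Measure.map_congr (g := (· + (-a))) (ae_restrict_of_forall_mem measurableSet_Ico
      fun t ht => (rotateIco_of_le ht.1).trans (sub_eq_add_neg t a)),
      map_add_const_volume_restrict, image_add_const_Ico]
    congr 2; ring
  calc (volume.restrict (Ico 0 1)).map (rotateIco a)
      _ = volume.restrict (Ico (1 - a) 1) + volume.restrict (Ico 0 (1 - a)) := by
        rw [hsplit a ha0 ha1, Measure.map_add _ _ (measurable_rotateIco a), hleft, hright]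
      _ = volume.restrict (Ico 0 1) := by
        rw [add_comm, hsplit (1 - a) (by linarith) (by linarith)]

end rotateIco

noncomputable def twoStepFunction (a α β t : ℝ) : ℝ :=
  α * (Ico 0 a).indicator (fun _ => 1) t + β * (Ico a 1).indicator (fun _ => 1) t

section twoStepFunction

variable {a α β t : ℝ}

theorem twoStepFunction_of_mem_Ico_zero (ht : t ∈ Ico 0 a) : twoStepFunction a α β t = α := by
  have ht' : t ∉ Ico a 1 := fun h => (not_le.2 ht.2) h.1
  simp [twoStepFunction, indicator_of_mem ht, indicator_of_notMem ht']

theorem twoStepFunction_of_mem_Ico_one (ht : t ∈ Ico a 1) : twoStepFunction a α β t = β := by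
  have ht' : t ∉ Ico 0 a := fun h => (not_le.2 h.2) ht.1
  simp [twoStepFunction, indicator_of_mem ht, indicator_of_notMem ht']

theorem mul_twoStepFunction (c : ℝ) :
    c * twoStepFunction a α β t = twoStepFunction a (c * α) (c * β) t := by
  simp only [twoStepFunction]; ring

theorem setIntegral_Ico_indicator_one {b d : ℝ} (hb : 0 ≤ b) (hbd : b ≤ d) (hd : d ≤ 1) :
    ∫ t in Ico (0:ℝ) 1, (Ico b d).indicator (fun _ => (1:ℝ)) t = d - b := by
  rw [integral_indicator_const _ measurableSet_Ico, measureReal_restrict_apply measurableSet_Ico,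
    Ico_inter_Ico, max_eq_left hb, min_eq_left hd, Real.volume_real_Ico_of_le hbd, smul_eq_mul,
    mul_one]

theorem setIntegral_twoStepFunction (ha0 : 0 ≤ a) (ha1 : a ≤ 1) :
    ∫ t in Ico (0:ℝ) 1, twoStepFunction a α β t = α * a + β * (1 - a) := by
  have hint : ∀ b d : ℝ,
      Integrable ((Ico b d).indicator (fun _ => (1:ℝ))) (volume.restrict (Ico 0 1)) :=
    fun b d => (integrable_const 1).indicator measurableSet_Ico
  unfold twoStepFunction
  rw [integral_add ((hint 0 a).const_mul α) ((hint a 1).const_mul β),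
    integral_const_mul, integral_const_mul, setIntegral_Ico_indicator_one le_rfl ha0 ha1,
    setIntegral_Ico_indicator_one ha0 ha1 le_rfl, sub_zero]

theorem ofReal_max_abs_le_eLpNorm_twoStepFunction (ha0 : 0 < a) (ha1 : a < 1) :
    ENNReal.ofReal (max |α| |β|) ≤
      eLpNorm (twoStepFunction a α β) ⊤ (volume.restrict (Ico 0 1)) := by
  have hpos : ∀ b d : ℝ, 0 ≤ b → b < d → d ≤ 1 →
      volume.restrict (Ico (0:ℝ) 1) (Ico b d) ≠ 0 :=
    fun b d hb hbd hd => by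
      rw [Measure.restrict_eq_self _ (Ico_subset_Ico hb hd), Real.volume_Ico]
      simpa using hbd
  rw [ENNReal.ofReal_max, max_le_iff, ← Real.enorm_eq_ofReal_abs, ← Real.enorm_eq_ofReal_abs]
  exact ⟨enorm_le_eLpNorm_top_of_forall_mem (hpos 0 a le_rfl ha0 ha1.le)
      fun _ => twoStepFunction_of_mem_Ico_zero,
    enorm_le_eLpNorm_top_of_forall_mem (hpos a 1 ha0.le ha1 le_rfl)
      fun _ => twoStepFunction_of_mem_Ico_one⟩

end twoStepFunction

theorem rotateIco_sub_self {a t : ℝ} (ht : t ∈ Ico 0 1) :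
    rotateIco a t - t = twoStepFunction a (1 - a) (-a) t := by
  rcases lt_or_ge t a with h | h
  · rw [rotateIco_of_lt h, twoStepFunction_of_mem_Ico_zero ⟨ht.1, h⟩]; ring
  · rw [rotateIco_of_le h, twoStepFunction_of_mem_Ico_one ⟨h, ht.2⟩]; ring

theorem norm_mul_sub_half_le (c : ℝ) {t : ℝ} (ht : t ∈ Ico 0 1) :
    ‖c * (t - 1 / 2)‖ ≤ |c| / 2 := by
  have : |t - 1 / 2| ≤ 1 / 2 := abs_le.2 ⟨by linarith [ht.1], by linarith [ht.2]⟩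
  rw [Real.norm_eq_abs, abs_mul]
  nlinarith [abs_nonneg c]

theorem memLp_top_mul_sub_half (c : ℝ) :
    MemLp (fun t => c * (t - 1 / 2)) ⊤ (volume.restrict (Ico 0 1)) :=
  memLp_top_of_bound (by fun_prop) (|c| / 2)
    (ae_restrict_of_forall_mem measurableSet_Ico fun _ => norm_mul_sub_half_le c)

theorem eLpNorm_top_mul_sub_half_le (c : ℝ) :
    eLpNorm (fun t => c * (t - 1 / 2)) ⊤ (volume.restrict (Ico 0 1)) ≤
      ENNReal.ofReal (|c| / 2) := by
  rw [eLpNorm_exponent_top]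
  exact eLpNormEssSup_le_of_ae_bound
    (ae_restrict_of_forall_mem measurableSet_Ico fun _ => norm_mul_sub_half_le c)

theorem stmt11 (a α β : ℝ) (ha : a ∈ Set.Ioo (0:ℝ) 1) (f : ℝ → ℝ)
    (hf : f = fun t => α * Set.indicator (Set.Ico (0:ℝ) a) (fun _ => (1:ℝ)) t
        + β * Set.indicator (Set.Ico a 1) (fun _ => (1:ℝ)) t)
    (hmean : ∫ t in Set.Ico (0:ℝ) 1, f t = 0) :
    ∃ g T : ℝ → ℝ,
      MemLp g ⊤ (volume.restrict (Set.Ico (0:ℝ) 1)) ∧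
      eLpNorm g ⊤ (volume.restrict (Set.Ico (0:ℝ) 1)) ≤
        eLpNorm f ⊤ (volume.restrict (Set.Ico (0:ℝ) 1)) ∧
      Set.BijOn T (Set.Ico (0:ℝ) 1) (Set.Ico (0:ℝ) 1) ∧
      MeasurePreserving T (volume.restrict (Set.Ico (0:ℝ) 1))
        (volume.restrict (Set.Ico (0:ℝ) 1)) ∧
      f =ᵐ[volume.restrict (Set.Ico (0:ℝ) 1)] fun t => g (T t) - g t := by
  obtain ⟨ha0, ha1⟩ := ha
  obtain rfl : f = twoStepFunction a α β := hf
  rw [setIntegral_twoStepFunction ha0.le ha1.le] at hmean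
  obtain ⟨c, rfl⟩ : ∃ c, α = c * (1 - a) :=
    ⟨α / (1 - a), (div_mul_cancel₀ _ (sub_ne_zero.2 ha1.ne')).symm⟩
  obtain rfl : β = c * -a :=
    mul_right_cancel₀ (sub_ne_zero.2 ha1.ne') (by linear_combination hmean)
  refine ⟨fun t => c * (t - 1 / 2), rotateIco a, memLp_top_mul_sub_half c, ?_,
    bijOn_rotateIco ha0.le ha1.le, measurePreserving_rotateIco ha0.le ha1.le, ?_⟩
  · refine (eLpNorm_top_mul_sub_half_le c).trans
      (le_trans (ENNReal.ofReal_le_ofReal ?_) (ofReal_max_abs_le_eLpNorm_twoStepFunction ha0 ha1))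
    rw [abs_mul, abs_mul, abs_neg, abs_of_pos ha0, abs_of_pos (sub_pos.2 ha1)]
    rcases le_total a (1 / 2) with h | h
    · exact le_max_of_le_left (by nlinarith [abs_nonneg c])
    · exact le_max_of_le_right (by nlinarith [abs_nonneg c])
  · refine ae_restrict_of_forall_mem measurableSet_Ico fun t ht => ?_
    rw [← mul_twoStepFunction, ← rotateIco_sub_self ht]
    ring
end

section
/- Let $A, B \subseteq [0,1]$ be disjoint measurable sets and let $f = \alpha\chi_A + \beta\chi_B \in L_\infty[0,1]$ be mean zero. Then there exists $g \in L_\infty[0,1]$ with $\|g\|_\infty \leq \|f\|_\infty$ and a measure preserving transformation mod0 $T$ of $[0,1]$ with $f = g \circ T - g$ almost everywhere; moreover $T$ can be chosen to be the identity on $[0,1] \setminus (A \cup B)$. -/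
/-!
Let `a = |A|` and `b = |B|`; if one of them vanishes, the mean zero condition forces `f = 0`
almost everywhere. Otherwise lay out `B` and then `A` on `[0, a + b]`, each in its increasing
rearrangement `x ↦ |A ∩ (-∞, x]|`; this coordinate `ψ` is a measure preserving bijection mod 0,
and so is the coordinate `Φ` laying out `A` first. The transformation `T = ψ⁻¹ ∘ Φ`, extended by
the identity, is the rotation by `a` modulo `a + b` in the coordinate `ψ`: it shifts `ψ` by `-b`
on `A` and by `a` on `B`. Hence `g = σ (ψ - (a + b) / 2)` satisfies `g ∘ T - g = f` for
`σ = β / a = -α / b`, and `‖g‖∞ = |σ| (a + b) / 2 = (|α| + |β|) / 2 ≤ ‖f‖∞`.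
-/

open MeasureTheory Set

/-- A measure preserving transformation mod0 between subsets `A` and `B` of `ℝ`:
a bijection between co-null subsets, measurable in both directions, preserving
Lebesgue measure of measurable sets. -/
def MPTmod0 (A B : Set ℝ) (T : ℝ → ℝ) : Prop :=
  ∃ N N' : Set ℝ, N ⊆ A ∧ N' ⊆ B ∧
    MeasureTheory.volume N = 0 ∧ MeasureTheory.volume N' = 0 ∧
    Set.BijOn T (A \ N) (B \ N') ∧
    (∀ S : Set ℝ, S ⊆ A \ N → MeasurableSet S →
      MeasurableSet (T '' S) ∧ MeasureTheory.volume (T '' S) = MeasureTheory.volume S) ∧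
    (∀ S : Set ℝ, S ⊆ B \ N' → MeasurableSet S → MeasurableSet ((A \ N) ∩ T ⁻¹' S))

structure MeasurePresBijOn {α β : Type*} [MeasurableSpace α] [MeasurableSpace β]
    (μ : Measure α) (ν : Measure β) (T : α → β) (s : Set α) (t : Set β) : Prop where
  measurableSet_source : MeasurableSet s
  bijOn : BijOn T s t
  measurableSet_image : ∀ u ⊆ s, MeasurableSet u → MeasurableSet (T '' u)
  measure_image : ∀ u ⊆ s, MeasurableSet u → ν (T '' u) = μ u
  measurableSet_inter_preimage : ∀ v ⊆ t, MeasurableSet v → MeasurableSet (s ∩ T ⁻¹' v)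

namespace MeasurePresBijOn

variable {α β γ : Type*} [MeasurableSpace α] [MeasurableSpace β] [MeasurableSpace γ]
  {μ : Measure α} {ν : Measure β} {ρ : Measure γ} {T T' : α → β} {S : β → γ}
  {s s₁ s₂ : Set α} {t t₁ t₂ : Set β} {r : Set γ}

theorem measurableSet_target (h : MeasurePresBijOn μ ν T s t) : MeasurableSet t :=
  h.bijOn.image_eq ▸ h.measurableSet_image s subset_rfl h.measurableSet_source

theorem measure_inter_preimage (h : MeasurePresBijOn μ ν T s t) {v : Set β} (hvt : v ⊆ t)
    (hv : MeasurableSet v) : μ (s ∩ T ⁻¹' v) = ν v := by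
  rw [← h.measure_image _ inter_subset_left (h.measurableSet_inter_preimage v hvt hv),
    image_inter_preimage, h.bijOn.image_eq, inter_eq_self_of_subset_right hvt]

protected theorem id (hs : MeasurableSet s) : MeasurePresBijOn μ μ id s s where
  measurableSet_source := hs
  bijOn := bijOn_id s
  measurableSet_image u _ hu := by rwa [image_id]
  measure_image u _ _ := by rw [image_id]
  measurableSet_inter_preimage v _ hv := hs.inter hv

theorem congr (h : MeasurePresBijOn μ ν T s t) (hT : EqOn T T' s) :
    MeasurePresBijOn μ ν T' s t where
  measurableSet_source := h.measurableSet_source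
  bijOn := h.bijOn.congr hT
  measurableSet_image u hu hum := (hT.mono hu).image_eq ▸ h.measurableSet_image u hu hum
  measure_image u hu hum := (hT.mono hu).image_eq ▸ h.measure_image u hu hum
  measurableSet_inter_preimage v hv hvm := by
    rw [← hT.inter_preimage_eq]; exact h.measurableSet_inter_preimage v hv hvm

theorem mono_source (h : MeasurePresBijOn μ ν T s t) (hs₁ : s₁ ⊆ s) (hs₁m : MeasurableSet s₁) :
    MeasurePresBijOn μ ν T s₁ (T '' s₁) where
  measurableSet_source := hs₁m
  bijOn := h.bijOn.subset_left hs₁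
  measurableSet_image u hu := h.measurableSet_image u (hu.trans hs₁)
  measure_image u hu := h.measure_image u (hu.trans hs₁)
  measurableSet_inter_preimage v hv hvm := by
    have : s₁ ∩ T ⁻¹' v = s₁ ∩ (s ∩ T ⁻¹' v) := by
      rw [← inter_assoc, inter_eq_left.2 hs₁]
    rw [this]
    exact hs₁m.inter (h.measurableSet_inter_preimage v
      ((image_mono hs₁).trans h.bijOn.image_eq.subset |>.trans' hv) hvm)

theorem mono_target (h : MeasurePresBijOn μ ν T s t) (ht₁ : t₁ ⊆ t) (ht₁m : MeasurableSet t₁) :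
    MeasurePresBijOn μ ν T (s ∩ T ⁻¹' t₁) t₁ where
  measurableSet_source := h.measurableSet_inter_preimage t₁ ht₁ ht₁m
  bijOn := h.bijOn.subset_right ht₁
  measurableSet_image u hu := h.measurableSet_image u (hu.trans inter_subset_left)
  measure_image u hu := h.measure_image u (hu.trans inter_subset_left)
  measurableSet_inter_preimage v hv hvm := by
    have : s ∩ T ⁻¹' t₁ ∩ T ⁻¹' v = s ∩ T ⁻¹' v := by
      rw [inter_assoc, ← preimage_inter, inter_eq_right.2 hv]
    rw [this]
    exact h.measurableSet_inter_preimage v (hv.trans ht₁) hvm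

theorem comp (h₂ : MeasurePresBijOn ν ρ S t r) (h₁ : MeasurePresBijOn μ ν T s t) :
    MeasurePresBijOn μ ρ (S ∘ T) s r where
  measurableSet_source := h₁.measurableSet_source
  bijOn := h₂.bijOn.comp h₁.bijOn
  measurableSet_image u hu hum := by
    rw [image_comp]
    exact h₂.measurableSet_image _ ((image_mono hu).trans h₁.bijOn.mapsTo.image_subset)
      (h₁.measurableSet_image u hu hum)
  measure_image u hu hum := by
    rw [image_comp, h₂.measure_image _ ((image_mono hu).trans h₁.bijOn.mapsTo.image_subset)
      (h₁.measurableSet_image u hu hum), h₁.measure_image u hu hum]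
  measurableSet_inter_preimage w hw hwm := by
    have : s ∩ (S ∘ T) ⁻¹' w = s ∩ T ⁻¹' (t ∩ S ⁻¹' w) := by
      ext x
      simp only [mem_inter_iff, mem_preimage, Function.comp_apply]
      exact ⟨fun hx => ⟨hx.1, h₁.bijOn.mapsTo hx.1, hx.2⟩, fun hx => ⟨hx.1, hx.2.2⟩⟩
    rw [this]
    exact h₁.measurableSet_inter_preimage _ inter_subset_left
      (h₂.measurableSet_inter_preimage w hw hwm)

theorem symm [Nonempty α] (h : MeasurePresBijOn μ ν T s t) :
    MeasurePresBijOn ν μ (Function.invFunOn T s) t s := by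
  have hinv := h.bijOn.invOn_invFunOn
  have hbij := h.bijOn.symm hinv.symm
  have himage : ∀ v ⊆ t, Function.invFunOn T s '' v = s ∩ T ⁻¹' v := fun v hv => by
    ext x
    constructor
    · rintro ⟨y, hy, rfl⟩
      exact ⟨hbij.mapsTo (hv hy), by rwa [mem_preimage, hinv.2 (hv hy)]⟩
    · rintro ⟨hx, hxv⟩
      exact ⟨T x, hxv, hinv.1 hx⟩
  have hpreimage : ∀ u ⊆ s, t ∩ Function.invFunOn T s ⁻¹' u = T '' u := fun u hu => by
    ext y
    constructor
    · rintro ⟨hy, hyu⟩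
      exact ⟨_, hyu, hinv.2 hy⟩
    · rintro ⟨x, hx, rfl⟩
      exact ⟨h.bijOn.mapsTo (hu hx), by rwa [mem_preimage, hinv.1 (hu hx)]⟩
  refine ⟨h.measurableSet_target, hbij, fun v hv hvm => ?_, fun v hv hvm => ?_,
    fun u hu hum => ?_⟩
  · rw [himage v hv]; exact h.measurableSet_inter_preimage v hv hvm
  · rw [himage v hv, h.measure_inter_preimage hv hvm]
  · rw [hpreimage u hu]; exact h.measurableSet_image u hu hum

theorem union (h₁ : MeasurePresBijOn μ ν T s₁ t₁) (h₂ : MeasurePresBijOn μ ν T s₂ t₂)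
    (hs : Disjoint s₁ s₂) (ht : Disjoint t₁ t₂) :
    MeasurePresBijOn μ ν T (s₁ ∪ s₂) (t₁ ∪ t₂) := by
  have himage : ∀ u ⊆ s₁ ∪ s₂, T '' u = T '' (u ∩ s₁) ∪ T '' (u ∩ s₂) := fun u hu => by
    rw [← image_union, ← inter_union_distrib_left, inter_eq_left.2 hu]
  have hdisj : ∀ u ⊆ s₁ ∪ s₂, Disjoint (T '' (u ∩ s₁)) (T '' (u ∩ s₂)) := fun u _ =>
    ht.mono ((h₁.bijOn.mapsTo.mono_left inter_subset_right).image_subset)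
      ((h₂.bijOn.mapsTo.mono_left inter_subset_right).image_subset)
  refine ⟨h₁.measurableSet_source.union h₂.measurableSet_source,
    h₁.bijOn.union h₂.bijOn ?_, fun u hu hum => ?_, fun u hu hum => ?_, fun v hv hvm => ?_⟩
  · refine (injOn_union hs).2 ⟨h₁.bijOn.injOn, h₂.bijOn.injOn, fun x hx y hy hxy => ?_⟩
    exact ht.ne_of_mem (h₁.bijOn.mapsTo hx) (h₂.bijOn.mapsTo hy) hxy
  · rw [himage u hu]
    exact (h₁.measurableSet_image _ inter_subset_right (hum.inter h₁.measurableSet_source)).union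
      (h₂.measurableSet_image _ inter_subset_right (hum.inter h₂.measurableSet_source))
  · rw [himage u hu, measure_union (hdisj u hu)
      (h₂.measurableSet_image _ inter_subset_right (hum.inter h₂.measurableSet_source)),
      h₁.measure_image _ inter_subset_right (hum.inter h₁.measurableSet_source),
      h₂.measure_image _ inter_subset_right (hum.inter h₂.measurableSet_source),
      ← measure_union (hs.mono inter_subset_right inter_subset_right)
        (hum.inter h₂.measurableSet_source), ← inter_union_distrib_left, inter_eq_left.2 hu]
  · have hpre : ∀ {s' : Set α} {t' : Set β}, MapsTo T s' t' →
        s' ∩ T ⁻¹' v = s' ∩ T ⁻¹' (v ∩ t') := fun hst => by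
      ext x
      simp only [mem_inter_iff, mem_preimage]
      exact ⟨fun hx => ⟨hx.1, hx.2, hst hx.1⟩, fun hx => ⟨hx.1, hx.2.1⟩⟩
    rw [union_inter_distrib_right, hpre h₁.bijOn.mapsTo, hpre h₂.bijOn.mapsTo]
    exact (h₁.measurableSet_inter_preimage _ inter_subset_right
      (hvm.inter h₁.measurableSet_target)).union (h₂.measurableSet_inter_preimage _
      inter_subset_right (hvm.inter h₂.measurableSet_target))

theorem exists_comp_ae (h₂ : MeasurePresBijOn ν ρ S t₂ r) (h₁ : MeasurePresBijOn μ ν T s t₁)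
    (h₁₂ : ν (t₁ \ t₂) = 0) (h₂₁ : ν (t₂ \ t₁) = 0) :
    ∃ r' ⊆ r, μ (s \ T ⁻¹' t₂) = 0 ∧ ρ (r \ r') = 0 ∧
      MeasurePresBijOn μ ρ (S ∘ T) (s ∩ T ⁻¹' t₂) r' := by
  have hm : MeasurableSet (t₁ ∩ t₂) := h₁.measurableSet_target.inter h₂.measurableSet_source
  have hsource : s ∩ T ⁻¹' (t₁ ∩ t₂) = s ∩ T ⁻¹' t₂ := by
    rw [preimage_inter, ← inter_assoc, inter_eq_left.2 h₁.bijOn.mapsTo.subset_preimage]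
  refine ⟨S '' (t₁ ∩ t₂), h₂.bijOn.image_eq ▸ image_mono inter_subset_right, ?_, ?_,
    hsource ▸ (h₂.mono_source inter_subset_right hm).comp (h₁.mono_target inter_subset_left hm)⟩
  · have : s \ T ⁻¹' t₂ = s ∩ T ⁻¹' (t₁ \ t₂) := by
      rw [preimage_sdiff, ← inter_sdiff_assoc,
        inter_eq_left.2 h₁.bijOn.mapsTo.subset_preimage, sdiff_eq]
    rw [this, h₁.measure_inter_preimage sdiff_subset
      (h₁.measurableSet_target.diff h₂.measurableSet_source), h₁₂]
  · refine measure_mono_null ?_ ((h₂.measure_image _ sdiff_subset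
      (h₂.measurableSet_source.diff h₁.measurableSet_target)).trans h₂₁)
    rw [← h₂.bijOn.image_eq]
    rintro _ ⟨⟨x, hx, rfl⟩, hxr⟩
    exact ⟨x, ⟨hx, fun hx₁ => hxr ⟨x, ⟨hx₁, hx⟩, rfl⟩⟩, rfl⟩

end MeasurePresBijOn

theorem MeasurePresBijOn.mptMod0 {T : ℝ → ℝ} {S S' s s' : Set ℝ}
    (h : MeasurePresBijOn volume volume T s s') (hs : s ⊆ S) (hs' : s' ⊆ S')
    (hS : volume (S \ s) = 0) (hS' : volume (S' \ s') = 0) : MPTmod0 S S' T := by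
  refine ⟨S \ s, S' \ s', sdiff_subset, sdiff_subset, hS, hS', ?_⟩
  rw [sdiff_sdiff_cancel_left hs, sdiff_sdiff_cancel_left hs']
  exact ⟨h.bijOn, fun u hu hum => ⟨h.measurableSet_image u hu hum, h.measure_image u hu hum⟩,
    h.measurableSet_inter_preimage⟩

section ofMap

variable {α β : Type*} [MeasurableSpace α] [MeasurableSpace β] [StandardBorelSpace α]
  [MeasurableSpace.CountablySeparated β] {μ : Measure α} {ν : Measure β} {φ : α → β}
  {s : Set α} {t : Set β}

theorem MeasurePresBijOn.of_map_restrict (hφ : Measurable φ) (hs : MeasurableSet s)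
    (hinj : InjOn φ s) (hmap : (μ.restrict s).map φ = ν.restrict t) (hst : φ '' s ⊆ t) :
    MeasurePresBijOn μ ν φ s (φ '' s) where
  measurableSet_source := hs
  bijOn := hinj.bijOn_image
  measurableSet_image u hu hum := hum.image_of_measurable_injOn hφ (hinj.mono hu)
  measure_image u hu hum := by
    have himage := hum.image_of_measurable_injOn hφ (hinj.mono hu)
    rw [← inter_eq_left.2 ((image_mono hu).trans hst), ← Measure.restrict_apply himage, ← hmap,
      Measure.map_apply hφ himage, Measure.restrict_apply (hφ himage),
      hinj.preimage_image_inter hu]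
  measurableSet_inter_preimage _ _ hv := hs.inter (hφ hv)

theorem measure_sdiff_image_of_map_restrict (hφ : Measurable φ) (hs : MeasurableSet s)
    (hinj : InjOn φ s) (hmap : (μ.restrict s).map φ = ν.restrict t) :
    ν (t \ φ '' s) = 0 := by
  have himage := (hs.image_of_measurable_injOn hφ hinj).compl
  rw [sdiff_eq, inter_comm, ← Measure.restrict_apply himage, ← hmap, Measure.map_apply hφ himage,
    Measure.restrict_apply (hφ himage), preimage_compl]
  exact measure_mono_null (fun x hx => hx.1 (subset_preimage_image φ s hx.2)) measure_empty

end ofMap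

theorem Monotone.exists_preimage_Iic_eq_Iic {α δ : Type*} [ConditionallyCompleteLinearOrder α]
    [TopologicalSpace α] [OrderTopology α] [DenselyOrdered α] [LinearOrder δ]
    [TopologicalSpace δ] [OrderClosedTopology δ] {φ : α → δ} (hmono : Monotone φ)
    (hφ : Continuous φ) {a b : α} {t : δ} (ha : φ a ≤ t) (hb : t < φ b) :
    ∃ x₀, φ x₀ = t ∧ φ ⁻¹' Iic t = Iic x₀ := by
  have hbdd : BddAbove (φ ⁻¹' Iic t) :=
    ⟨b, fun x hx => le_of_lt (hmono.reflect_lt (lt_of_le_of_lt hx hb))⟩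
  have hx₀ : sSup (φ ⁻¹' Iic t) ∈ φ ⁻¹' Iic t :=
    (isClosed_Iic.preimage hφ).csSup_mem ⟨a, ha⟩ hbdd
  have hpre : φ ⁻¹' Iic t = Iic (sSup (φ ⁻¹' Iic t)) :=
    Subset.antisymm (fun x hx => le_csSup hbdd hx) fun x hx => (hmono hx).trans hx₀
  refine ⟨_, le_antisymm hx₀ ?_, hpre⟩
  obtain ⟨x, -, hx⟩ := intermediate_value_Icc (hmono.reflect_lt (lt_of_le_of_lt ha hb)).le
    hφ.continuousOn ⟨ha, hb.le⟩
  exact hx.ge.trans (hmono (le_csSup hbdd (show φ x ≤ t from hx.le)))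

noncomputable def cumVol (A : Set ℝ) (x : ℝ) : ℝ := volume.real (A ∩ Iic x)

section cumVol

variable {A : Set ℝ}

theorem cumVol_sub_cumVol (hA : volume A ≠ ⊤) {x y : ℝ} (hxy : x ≤ y) :
    cumVol A y - cumVol A x = volume.real (A ∩ Ioc x y) := by
  have hfin : volume (A ∩ Iic y) ≠ ⊤ := measure_ne_top_of_subset inter_subset_left hA
  rw [cumVol, cumVol, ← measureReal_inter_add_sdiff₀ measurableSet_Iic.nullMeasurableSet hfin
    (t := Iic x), inter_assoc, Iic_inter_Iic, min_eq_right hxy, add_sub_cancel_left]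
  congr 1
  ext z
  simp only [mem_inter_iff, mem_sdiff, mem_Iic, mem_Ioc, not_le]
  tauto

theorem monotone_cumVol (hA : volume A ≠ ⊤) : Monotone (cumVol A) := fun _ _ hxy =>
  sub_nonneg.1 (cumVol_sub_cumVol hA hxy ▸ measureReal_nonneg)

theorem lipschitzWith_cumVol (hA : volume A ≠ ⊤) : LipschitzWith 1 (cumVol A) := by
  have key : ∀ x y, x ≤ y → |cumVol A y - cumVol A x| ≤ y - x := fun x y hxy => by
    rw [cumVol_sub_cumVol hA hxy, abs_of_nonneg measureReal_nonneg,
      ← Real.volume_real_Ioc_of_le hxy]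
    exact measureReal_mono inter_subset_right measure_Ioc_lt_top.ne
  refine LipschitzWith.of_dist_le_mul fun x y => ?_
  rw [NNReal.coe_one, one_mul, Real.dist_eq, Real.dist_eq]
  rcases le_total x y with hxy | hyx
  · rw [abs_sub_comm, abs_sub_comm x, abs_of_nonneg (sub_nonneg.2 hxy)]
    exact key x y hxy
  · rw [abs_of_nonneg (sub_nonneg.2 hyx)]
    exact key y x hyx

theorem continuous_cumVol (hA : volume A ≠ ⊤) : Continuous (cumVol A) :=
  (lipschitzWith_cumVol hA).continuous

theorem cumVol_mem_Icc (hA : volume A ≠ ⊤) (x : ℝ) : cumVol A x ∈ Icc 0 (volume.real A) :=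
  ⟨measureReal_nonneg, measureReal_mono inter_subset_left hA⟩

theorem cumVol_eq_zero {x : ℝ} (hx : ∀ y ∈ A, x < y) : cumVol A x = 0 := by
  have : A ∩ Iic x = ∅ := eq_empty_of_forall_notMem fun y hy => (hx y hy.1).not_ge hy.2
  rw [cumVol, this, measureReal_empty]

theorem cumVol_eq_measureReal {x : ℝ} (hx : ∀ y ∈ A, y ≤ x) : cumVol A x = volume.real A := by
  rw [cumVol, inter_eq_left.2 fun y hy => mem_Iic.2 (hx y hy)]

theorem add_cumVol_mem_Icc (hA : volume A ≠ ⊤) (c x : ℝ) :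
    c + cumVol A x ∈ Icc c (c + volume.real A) :=
  ⟨le_add_of_nonneg_right (cumVol_mem_Icc hA x).1,
    (add_le_add_iff_left c).2 (cumVol_mem_Icc hA x).2⟩

theorem map_restrict_cumVol (hA : Bornology.IsBounded A) (c : ℝ) :
    (volume.restrict A).map (fun x => c + cumVol A x) =
      volume.restrict (Icc c (c + volume.real A)) := by
  have hfin : volume A ≠ ⊤ := hA.measure_lt_top.ne
  obtain ⟨l, hl⟩ := hA.bddBelow
  obtain ⟨r, hr⟩ := hA.bddAbove
  set φ := fun x => c + cumVol A x with hφ_def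
  have hφ : Continuous φ := continuous_const.add (continuous_cumVol hfin)
  have hmono : Monotone φ := fun x y h => (add_le_add_iff_left c).2 (monotone_cumVol hfin h)
  have hφl : φ (l - 1) = c := by
    show c + cumVol A (l - 1) = c
    rw [cumVol_eq_zero fun y hy => by linarith [hl hy], add_zero]
  have hφr : φ r = c + volume.real A := by show c + cumVol A r = _; rw [cumVol_eq_measureReal hr]
  have hφmem := add_cumVol_mem_Icc hfin c
  have : IsFiniteMeasure (volume.restrict A) := isFiniteMeasure_restrict.2 hfin
  refine Measure.ext_of_Iic _ _ fun t => ?_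
  rw [Measure.map_apply hφ.measurable measurableSet_Iic,
    Measure.restrict_apply (hφ.measurable measurableSet_Iic),
    Measure.restrict_apply measurableSet_Iic]
  rcases lt_or_ge t c with htc | htc
  · have h₁ : φ ⁻¹' Iic t ∩ A = ∅ :=
      eq_empty_of_forall_notMem fun x hx => htc.not_ge ((hφmem x).1.trans hx.1)
    have h₂ : Iic t ∩ Icc c (c + volume.real A) = ∅ :=
      eq_empty_of_forall_notMem fun x hx => htc.not_ge (hx.2.1.trans hx.1)
    rw [h₁, h₂]
  rcases le_or_gt (c + volume.real A) t with hta | hta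
  · have h₁ : φ ⁻¹' Iic t ∩ A = A := inter_eq_right.2 fun x _ => (hφmem x).2.trans hta
    have h₂ : Iic t ∩ Icc c (c + volume.real A) = Icc c (c + volume.real A) :=
      inter_eq_right.2 fun x hx => hx.2.trans hta
    rw [h₁, h₂, Real.volume_Icc, add_sub_cancel_left, ofReal_measureReal hfin]
  · obtain ⟨x₀, hx₀, hpre⟩ := hmono.exists_preimage_Iic_eq_Iic hφ (hφl.symm ▸ htc) (hφr.symm ▸ hta)
    have h₂ : Iic t ∩ Icc c (c + volume.real A) = Icc c t := by
      ext x
      simp only [mem_inter_iff, mem_Iic, mem_Icc]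
      constructor
      · rintro ⟨hxt, hcx, -⟩; exact ⟨hcx, hxt⟩
      · rintro ⟨hcx, hxt⟩; exact ⟨hxt, hcx, hxt.trans hta.le⟩
    rw [hpre, h₂, Real.volume_Icc, ← hx₀, hφ_def, add_sub_cancel_left, cumVol, inter_comm,
      ofReal_measureReal (measure_ne_top_of_subset inter_subset_left hfin)]

theorem exists_measurePresBijOn_cumVol (hAm : MeasurableSet A)
    (hA : Bornology.IsBounded A) (c : ℝ) :
    ∃ s ⊆ A, ∃ t ⊆ Ioo c (c + volume.real A), volume (A \ s) = 0 ∧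
      volume (Icc c (c + volume.real A) \ t) = 0 ∧
      MeasurePresBijOn volume volume (fun x => c + cumVol A x) s t := by
  have hfin : volume A ≠ ⊤ := hA.measure_lt_top.ne
  set φ := fun x => c + cumVol A x
  have hφ : Continuous φ := continuous_const.add (continuous_cumVol hfin)
  have hmono : Monotone φ := fun x y h => (add_le_add_iff_left c).2 (monotone_cumVol hfin h)
  -- Off the level sets through rational points and the two extreme levels, `φ` is strictly
  -- increasing.
  set C : Set ℝ := insert c (insert (c + volume.real A) (range fun q : ℚ => φ q))
  have hC : C.Countable := ((countable_range _).insert _).insert _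
  have hmap := map_restrict_cumVol hA c
  have hnull : volume (φ ⁻¹' C ∩ A) = 0 := by
    rw [← Measure.restrict_apply (hφ.measurable hC.measurableSet),
      ← Measure.map_apply hφ.measurable hC.measurableSet, hmap]
    exact nonpos_iff_eq_zero.1 ((Measure.restrict_apply_le _ _).trans (hC.measure_zero _).le)
  set s := A \ φ ⁻¹' C
  have hsm : MeasurableSet s := hAm.diff (hφ.measurable hC.measurableSet)
  have hstrict : StrictMonoOn φ s := fun x hx y _ hxy => by
    refine (hmono hxy.le).lt_of_ne fun hφxy => hx.2 ?_
    obtain ⟨q, hxq, hqy⟩ := exists_rat_btwn hxy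
    have : φ x = φ q := le_antisymm (hmono hxq.le) (hφxy ▸ hmono hqy.le)
    exact mem_insert_of_mem _ (mem_insert_of_mem _ ⟨q, this.symm⟩)
  have hmap' : (volume.restrict s).map φ = volume.restrict (Icc c (c + volume.real A)) := by
    rw [Measure.restrict_congr_set (sdiff_ae_eq_self.2 (by rwa [inter_comm])), hmap]
  have hst : φ '' s ⊆ Ioo c (c + volume.real A) := by
    rintro _ ⟨x, hx, rfl⟩
    have hmem : φ x ∈ Icc c (c + volume.real A) := add_cumVol_mem_Icc hfin c x
    exact ⟨hmem.1.lt_of_ne fun h => hx.2 (by rw [mem_preimage, ← h]; exact mem_insert _ _),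
      hmem.2.lt_of_ne fun h => hx.2 (by
        rw [mem_preimage, h]; exact mem_insert_of_mem _ (mem_insert _ _))⟩
  refine ⟨s, sdiff_subset, φ '' s, hst,
    measure_mono_null (fun x (hx : x ∈ A \ s) => (⟨not_not.1 fun h => hx.2 ⟨hx.1, h⟩, hx.1⟩ :
      x ∈ φ ⁻¹' C ∩ A)) hnull,
    measure_sdiff_image_of_map_restrict hφ.measurable hsm hstrict.injOn hmap',
    MeasurePresBijOn.of_map_restrict hφ.measurable hsm hstrict.injOn hmap'
      (hst.trans Ioo_subset_Icc_self)⟩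

end cumVol

/-- The coordinate of `x` when `A` is laid out on `[0, |A|]` followed by `B` on
`[|A|, |A| + |B|]`, each in its increasing rearrangement. -/
noncomputable def layout (A B : Set ℝ) (x : ℝ) : ℝ :=
  open Classical in if x ∈ A then cumVol A x else volume.real A + cumVol B x

section layout

variable {A B : Set ℝ}

theorem layout_of_mem {x : ℝ} (hx : x ∈ A) : layout A B x = cumVol A x := by
  simp [layout, hx]

theorem layout_of_notMem {x : ℝ} (hx : x ∉ A) : layout A B x = volume.real A + cumVol B x := by
  simp [layout, hx]

theorem layout_mem_Icc (hA : volume A ≠ ⊤) (hB : volume B ≠ ⊤) (x : ℝ) :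
    layout A B x ∈ Icc 0 (volume.real A + volume.real B) := by
  by_cases hx : x ∈ A
  · rw [layout_of_mem hx]
    exact ⟨(cumVol_mem_Icc hA x).1,
      (cumVol_mem_Icc hA x).2.trans (le_add_of_nonneg_right measureReal_nonneg)⟩
  · rw [layout_of_notMem hx]
    exact ⟨add_nonneg measureReal_nonneg (cumVol_mem_Icc hB x).1,
      (add_le_add_iff_left _).2 (cumVol_mem_Icc hB x).2⟩

theorem measurable_layout (hAm : MeasurableSet A) (hA : volume A ≠ ⊤) (hB : volume B ≠ ⊤) :
    Measurable (layout A B) := by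
  classical
  exact Measurable.ite hAm (continuous_cumVol hA).measurable
    (continuous_const.add (continuous_cumVol hB)).measurable

theorem layout_sub_layout_of_mem_left (hAB : Disjoint A B) {x : ℝ} (hx : x ∈ A) :
    layout A B x - layout B A x = -volume.real B := by
  rw [layout_of_mem hx, layout_of_notMem (hAB.notMem_of_mem_left hx)]
  ring

theorem layout_sub_layout_of_mem_right (hAB : Disjoint A B) {x : ℝ} (hx : x ∈ B) :
    layout A B x - layout B A x = volume.real A := by
  rw [layout_of_notMem (hAB.notMem_of_mem_right hx), layout_of_mem hx]
  ring

theorem exists_measurePresBijOn_layout (hAm : MeasurableSet A) (hBm : MeasurableSet B)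
    (hA : Bornology.IsBounded A) (hB : Bornology.IsBounded B) (hAB : Disjoint A B) :
    ∃ s ⊆ A ∪ B, ∃ t ⊆ Icc 0 (volume.real A + volume.real B), volume ((A ∪ B) \ s) = 0 ∧
      volume (Icc 0 (volume.real A + volume.real B) \ t) = 0 ∧
      MeasurePresBijOn volume volume (layout A B) s t := by
  obtain ⟨sA, hsA, tA, htA, hsA0, htA0, hφA⟩ := exists_measurePresBijOn_cumVol hAm hA 0
  obtain ⟨sB, hsB, tB, htB, hsB0, htB0, hφB⟩ :=
    exists_measurePresBijOn_cumVol hBm hB (volume.real A)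
  rw [zero_add] at htA htA0
  have ha : 0 ≤ volume.real A := measureReal_nonneg
  have hb : 0 ≤ volume.real B := measureReal_nonneg
  refine ⟨sA ∪ sB, union_subset_union hsA hsB, tA ∪ tB, ?_, ?_, ?_, ?_⟩
  · refine union_subset (htA.trans ?_) (htB.trans ?_) <;>
      exact Ioo_subset_Icc_self.trans (Icc_subset_Icc (by linarith) (by linarith))
  · refine measure_mono_null (fun x hx => ?_) (measure_union_null hsA0 hsB0)
    rcases hx.1 with hxA | hxB
    · exact Or.inl ⟨hxA, fun h => hx.2 (Or.inl h)⟩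
    · exact Or.inr ⟨hxB, fun h => hx.2 (Or.inr h)⟩
  · refine measure_mono_null (fun x hx => ?_) (measure_union_null htA0 htB0)
    rcases le_total x (volume.real A) with hxa | hax
    · exact Or.inl ⟨⟨hx.1.1, hxa⟩, fun h => hx.2 (Or.inl h)⟩
    · exact Or.inr ⟨⟨hax, hx.1.2⟩, fun h => hx.2 (Or.inr h)⟩
  · refine (hφA.congr fun x hx => ?_).union (hφB.congr fun x hx => ?_) (hAB.mono hsA hsB) ?_
    · rw [layout_of_mem (hsA hx), zero_add]
    · rw [layout_of_notMem (hAB.notMem_of_mem_right (hsB hx))]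
    · exact disjoint_left.2 fun x hxA hxB => (htA hxA).2.not_gt (htB hxB).1

theorem exists_measurePresBijOn_layout_comm (hAm : MeasurableSet A)
    (hBm : MeasurableSet B) (hA : Bornology.IsBounded A) (hB : Bornology.IsBounded B)
    (hAB : Disjoint A B) :
    ∃ T : ℝ → ℝ, ∃ s ⊆ A ∪ B, ∃ t ⊆ A ∪ B, volume ((A ∪ B) \ s) = 0 ∧
      volume ((A ∪ B) \ t) = 0 ∧ MeasurePresBijOn volume volume T s t ∧
      ∀ x ∈ s, layout B A (T x) = layout A B x := by
  obtain ⟨s₁, hs₁, t₁, ht₁, hs₁0, ht₁0, h₁⟩ := exists_measurePresBijOn_layout hAm hBm hA hB hAB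
  obtain ⟨s₂, hs₂, t₂, ht₂, hs₂0, ht₂0, h₂⟩ :=
    exists_measurePresBijOn_layout hBm hAm hB hA hAB.symm
  rw [add_comm] at ht₂ ht₂0
  rw [union_comm] at hs₂ hs₂0
  obtain ⟨t, ht, hs0, ht0, h⟩ := h₂.symm.exists_comp_ae h₁
    (measure_mono_null (sdiff_subset_sdiff_left ht₁) ht₂0)
    (measure_mono_null (sdiff_subset_sdiff_left ht₂) ht₁0)
  refine ⟨_, _, inter_subset_left.trans hs₁, t, ht.trans hs₂, ?_, ?_, h, fun x hx => ?_⟩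
  · refine measure_mono_null (fun x hx => ?_) (measure_union_null hs₁0 hs0)
    by_cases hx₁ : x ∈ s₁
    · exact Or.inr ⟨hx₁, fun h => hx.2 ⟨hx₁, h⟩⟩
    · exact Or.inl ⟨hx.1, hx₁⟩
  · refine measure_mono_null (fun x hx => ?_) (measure_union_null hs₂0 ht0)
    by_cases hx₂ : x ∈ s₂
    · exact Or.inr ⟨hx₂, hx.2⟩
    · exact Or.inl ⟨hx.1, hx₂⟩
  · exact h₂.bijOn.invOn_invFunOn.2 hx.2

theorem exists_mptMod0_layout_comm {S : Set ℝ} (hSm : MeasurableSet S)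
    (hS : Bornology.IsBounded S) (hAm : MeasurableSet A) (hBm : MeasurableSet B) (hA : A ⊆ S)
    (hB : B ⊆ S) (hAB : Disjoint A B) :
    ∃ T : ℝ → ℝ, MPTmod0 S S T ∧ (∀ x ∈ S \ (A ∪ B), T x = x) ∧
      ∀ᵐ x, x ∈ A ∪ B → layout B A (T x) = layout A B x := by
  classical
  obtain ⟨T, s, hs, t, ht, hs0, ht0, h, hT⟩ :=
    exists_measurePresBijOn_layout_comm hAm hBm (hS.subset hA) (hS.subset hB) hAB
  set D := S \ (A ∪ B)
  have hABS : A ∪ B ⊆ S := union_subset hA hB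
  have hglue : MeasurePresBijOn volume volume (fun x => if x ∈ A ∪ B then T x else x)
      (s ∪ D) (t ∪ D) :=
    (h.congr fun x hx => (if_pos (hs hx)).symm).union
      ((MeasurePresBijOn.id (hSm.diff (hAm.union hBm))).congr fun x hx => (if_neg hx.2).symm)
      (disjoint_left.2 fun x hx hxD => hxD.2 (hs hx))
      (disjoint_left.2 fun x hx hxD => hxD.2 (ht hx))
  have hnull : ∀ u, S \ (u ∪ D) ⊆ (A ∪ B) \ u := fun u x hx =>
    ⟨not_not.1 fun h => hx.2 (Or.inr ⟨hx.1, h⟩), fun h => hx.2 (Or.inl h)⟩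
  refine ⟨_, hglue.mptMod0 (union_subset (hs.trans hABS) sdiff_subset)
      (union_subset (ht.trans hABS) sdiff_subset) (measure_mono_null (hnull s) hs0)
      (measure_mono_null (hnull t) ht0), fun x hx => if_neg hx.2, ?_⟩
  filter_upwards [measure_eq_zero_iff_ae_notMem.1 hs0] with x hx hxAB
  rw [if_pos hxAB]
  exact hT x (not_not.1 fun h => hx ⟨hxAB, h⟩)

end layout

section indicator

variable {X : Type*} [MeasurableSpace X] {μ : Measure X} {A B : Set X} {α β : ℝ}

theorem integral_mul_indicator_add_mul_indicator [IsFiniteMeasure μ] (hA : MeasurableSet A)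
    (hB : MeasurableSet B) :
    ∫ x, (α * A.indicator (fun _ => (1 : ℝ)) x + β * B.indicator (fun _ => (1 : ℝ)) x) ∂μ =
      α * μ.real A + β * μ.real B := by
  rw [integral_add ((integrable_const 1).indicator hA |>.const_mul α)
    ((integrable_const 1).indicator hB |>.const_mul β), integral_const_mul, integral_const_mul]
  exact congr_arg₂ (α * · + β * ·) (integral_indicator_one hA) (integral_indicator_one hB)

theorem mul_indicator_add_mul_indicator_ae_eq_zero [IsFiniteMeasure μ] (hA : α * μ.real A = 0)
    (hB : β * μ.real B = 0) :
    (fun x => α * A.indicator (fun _ => (1 : ℝ)) x + β * B.indicator (fun _ => (1 : ℝ)) x)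
      =ᵐ[μ] 0 := by
  have key : ∀ {γ : ℝ} {C : Set X}, γ * μ.real C = 0 →
      ∀ᵐ x ∂μ, γ * C.indicator (fun _ => (1 : ℝ)) x = 0 := fun h => by
    rcases mul_eq_zero.1 h with rfl | hC
    · exact ae_of_all _ fun x => zero_mul _
    · filter_upwards [measure_eq_zero_iff_ae_notMem.1 ((measureReal_eq_zero_iff).1 hC)] with x hx
      rw [indicator_of_notMem hx, mul_zero]
  filter_upwards [key hA, key hB] with x hxA hxB
  rw [hxA, hxB, add_zero, Pi.zero_apply]

end indicator

theorem enorm_le_eLpNorm_top_of_eqOn {X E : Type*} [MeasurableSpace X] [NormedAddCommGroup E]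
    {μ : Measure X} {f : X → E} {s : Set X} {v : E} (hs : μ s ≠ 0) (hf : ∀ x ∈ s, f x = v) :
    ‖v‖ₑ ≤ eLpNorm f ⊤ μ := by
  by_contra! h
  rw [eLpNorm_exponent_top] at h
  refine hs (measure_mono_null (fun x hx => ?_) (ae_iff.1 (ae_le_eLpNormEssSup (f := f))))
  exact fun hle => (h.trans_le (hf x hx ▸ hle)).false

theorem exists_coboundary_of_measureReal_pos {A B : Set ℝ} (hAm : MeasurableSet A)
    (hBm : MeasurableSet B) (hA : A ⊆ Icc 0 1) (hB : B ⊆ Icc 0 1) (hAB : Disjoint A B)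
    {α β : ℝ} {f : ℝ → ℝ} (hfA : ∀ x ∈ A, f x = α) (hfB : ∀ x ∈ B, f x = β)
    (hf0 : ∀ x ∉ A ∪ B, f x = 0) (ha : 0 < volume.real A) (hb : 0 < volume.real B)
    (hmean : α * volume.real A + β * volume.real B = 0) :
    ∃ g T : ℝ → ℝ, MPTmod0 (Icc 0 1) (Icc 0 1) T ∧
      MemLp g ⊤ (volume.restrict (Icc (0:ℝ) 1)) ∧
      eLpNorm g ⊤ (volume.restrict (Icc (0:ℝ) 1)) ≤
        eLpNorm f ⊤ (volume.restrict (Icc (0:ℝ) 1)) ∧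
      (f =ᵐ[volume.restrict (Icc (0:ℝ) 1)] fun x => g (T x) - g x) ∧
      (∀ x ∈ Icc (0:ℝ) 1 \ (A ∪ B), T x = x) := by
  obtain ⟨T, hT, hTid, hTlayout⟩ :=
    exists_mptMod0_layout_comm measurableSet_Icc (Metric.isBounded_Icc 0 1) hAm hBm hA hB hAB
  have hAfin : volume A ≠ ⊤ := measure_ne_top_of_subset hA (by simp)
  have hBfin : volume B ≠ ⊤ := measure_ne_top_of_subset hB (by simp)
  set a := volume.real A
  set b := volume.real B
  set σ := β / a
  have hβ : β = σ * a := (div_mul_cancel₀ β ha.ne').symm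
  have hα : α = -(σ * b) := by
    refine mul_right_cancel₀ ha.ne' ?_
    rw [neg_mul, mul_right_comm, ← hβ]
    linarith
  set g := fun x => σ * (layout B A x - (b + a) / 2)
  have hg : ∀ x, ‖g x‖ ≤ (|α| + |β|) / 2 := fun x => by
    have hx := layout_mem_Icc hBfin hAfin x
    have hcenter : |layout B A x - (b + a) / 2| ≤ (b + a) / 2 :=
      abs_le.2 ⟨by linarith [hx.1], by linarith [hx.2]⟩
    rw [Real.norm_eq_abs, abs_mul, hα, hβ, abs_neg, abs_mul, abs_mul, abs_of_pos ha, abs_of_pos hb]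
    nlinarith [abs_nonneg σ]
  have hpos : ∀ {C : Set ℝ}, C ⊆ Icc 0 1 → 0 < volume.real C →
      volume.restrict (Icc (0:ℝ) 1) C ≠ 0 := fun hC hCpos => by
    rw [Measure.restrict_eq_self _ hC]
    exact fun h0 => hCpos.ne' (by rw [measureReal_def, h0, ENNReal.toReal_zero])
  refine ⟨g, T, hT, memLp_top_of_bound ((measurable_layout hBm hBfin hAfin).sub_const _
    |>.const_mul σ).aestronglyMeasurable _ (ae_of_all _ hg), ?_, ?_, hTid⟩
  · calc eLpNorm g ⊤ (volume.restrict (Icc (0:ℝ) 1)) ≤ ENNReal.ofReal ((|α| + |β|) / 2) :=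
          eLpNorm_exponent_top (f := g) ▸ eLpNormEssSup_le_of_ae_bound (ae_of_all _ hg)
      _ ≤ ENNReal.ofReal (max |α| |β|) :=
          ENNReal.ofReal_le_ofReal (by linarith [le_max_left |α| |β|, le_max_right |α| |β|])
      _ = max ‖α‖ₑ ‖β‖ₑ := by
          rw [ENNReal.ofReal_max, Real.enorm_eq_ofReal_abs, Real.enorm_eq_ofReal_abs]
      _ ≤ _ := max_le (enorm_le_eLpNorm_top_of_eqOn (hpos hA ha) hfA)
          (enorm_le_eLpNorm_top_of_eqOn (hpos hB hb) hfB)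
  · filter_upwards [ae_restrict_of_ae hTlayout, ae_restrict_mem measurableSet_Icc]
      with x hx hxI
    by_cases hxAB : x ∈ A ∪ B
    · simp only [g]
      rw [← mul_sub, sub_sub_sub_cancel_right, hx hxAB]
      rcases hxAB with hxA | hxB
      · rw [hfA x hxA, layout_sub_layout_of_mem_left hAB hxA, hα, mul_neg]
      · rw [hfB x hxB, layout_sub_layout_of_mem_right hAB hxB, hβ]
    · rw [hTid x ⟨hxI, hxAB⟩, sub_self, hf0 x hxAB]

theorem stmt12 (A B : Set ℝ) (hA : MeasurableSet A) (hB : MeasurableSet B)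
    (hA1 : A ⊆ Set.Icc 0 1) (hB1 : B ⊆ Set.Icc 0 1) (hdisj : Disjoint A B)
    (α β : ℝ) (f : ℝ → ℝ)
    (hf : f = fun x => α * Set.indicator A (fun _ => (1:ℝ)) x
        + β * Set.indicator B (fun _ => (1:ℝ)) x)
    (hmean : ∫ x in Set.Icc (0:ℝ) 1, f x = 0) :
    ∃ g T : ℝ → ℝ, MPTmod0 (Set.Icc 0 1) (Set.Icc 0 1) T ∧
      MemLp g ⊤ (volume.restrict (Set.Icc (0:ℝ) 1)) ∧
      eLpNorm g ⊤ (volume.restrict (Set.Icc (0:ℝ) 1)) ≤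
        eLpNorm f ⊤ (volume.restrict (Set.Icc (0:ℝ) 1)) ∧
      (f =ᵐ[volume.restrict (Set.Icc (0:ℝ) 1)] fun x => g (T x) - g x) ∧
      (∀ x ∈ Set.Icc (0:ℝ) 1 \ (A ∪ B), T x = x) := by
  set μ := volume.restrict (Icc (0:ℝ) 1)
  have hμ : ∀ {C : Set ℝ}, C ⊆ Icc 0 1 → MeasurableSet C → μ.real C = volume.real C :=
    fun hC hCm => by rw [measureReal_restrict_apply hCm, inter_eq_left.2 hC]
  have hmean' : α * μ.real A + β * μ.real B = 0 := by
    rwa [hf, integral_mul_indicator_add_mul_indicator hA hB] at hmean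
  by_cases hpos : 0 < volume.real A ∧ 0 < volume.real B
  · rw [hμ hA1 hA, hμ hB1 hB] at hmean'
    refine exists_coboundary_of_measureReal_pos hA hB hA1 hB1 hdisj (fun x hx => ?_)
      (fun x hx => ?_) (fun x hx => ?_) hpos.1 hpos.2 hmean' <;>
    simp_all [indicator_of_notMem, hdisj.notMem_of_mem_left, hdisj.notMem_of_mem_right]
  have hdeg : α * μ.real A = 0 ∧ β * μ.real B = 0 := by
    rw [not_and_or, not_lt, not_lt, measureReal_nonneg.ge_iff_eq',
      measureReal_nonneg.ge_iff_eq', ← hμ hA1 hA, ← hμ hB1 hB] at hpos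
    rcases hpos with h | h <;> rw [h] at hmean' ⊢ <;> constructor <;> linarith
  refine ⟨0, id, (MeasurePresBijOn.id measurableSet_Icc).mptMod0 subset_rfl subset_rfl
    (by simp) (by simp), MemLp.zero, by simp, ?_, fun _ _ => rfl⟩
  filter_upwards [mul_indicator_add_mul_indicator_ae_eq_zero hdeg.1 hdeg.2] with x hx
  simpa [hf] using hx
end
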